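/- arXiv:1009.4535 — 3 statements merged into one kernel-verified Lean document; each statement's English description precedes it below -/
import Mathlib

section
/- For all integers n ≥ 3 and 1 ≤ k ≤ n/2, the numbers P(n,k) satisfy the recurrence P(n,k) = P(n-1,k) + (n-k)·P(n-2,k-1), with initial values P(1,0) = 1, P(2,0) = 1, P(2,1) = 1. -/
open Finset

/-- `(i, j)` is an arc of the linear representation of the set partition `P` of
`{1, ..., n}`: `i < j`, both lie in the same block, and no element of that block
lies strictly between them. -/
def IsArc {n : ℕ} (P : Finpartition (Finset.Icc 1 n)) (a : ℕ × ℕ) : Prop :=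
  a.1 < a.2 ∧ ∃ B ∈ P.parts, a.1 ∈ B ∧ a.2 ∈ B ∧ ∀ c ∈ B, ¬ (a.1 < c ∧ c < a.2)

/-- The number of arcs of a set partition. -/
noncomputable def numArcs {n : ℕ} (P : Finpartition (Finset.Icc 1 n)) : ℕ :=
  {a : ℕ × ℕ | IsArc P a}.ncard

/-- A partial matching: every block has at most two elements. -/
def IsMatching {n : ℕ} (P : Finpartition (Finset.Icc 1 n)) : Prop :=
  ∀ B ∈ P.parts, B.card ≤ 2

/-- A neighbor alignment: arcs `(i₁, j₁)`, `(i₂, j₂)` with `i₁ < j₁ < i₂ < j₂`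
and `j₁ + 1 = i₂`. -/
def HasNbrAlign {n : ℕ} (P : Finpartition (Finset.Icc 1 n)) : Prop :=
  ∃ a b : ℕ × ℕ, IsArc P a ∧ IsArc P b ∧ a.2 + 1 = b.1

/-- A left nesting: arcs `(i₁, j₁)`, `(i₂, j₂)` with `i₁ < i₂ < j₂ < j₁`
and `i₁ + 1 = i₂`. -/
def HasLeftNesting {n : ℕ} (P : Finpartition (Finset.Icc 1 n)) : Prop :=
  ∃ a b : ℕ × ℕ, IsArc P a ∧ IsArc P b ∧ a.1 + 1 = b.1 ∧ b.2 < a.2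

/-- A right nesting: arcs `(i₁, j₁)`, `(i₂, j₂)` with `i₁ < i₂ < j₂ < j₁`
and `j₂ + 1 = j₁`. -/
def HasRightNesting {n : ℕ} (P : Finpartition (Finset.Icc 1 n)) : Prop :=
  ∃ a b : ℕ × ℕ, IsArc P a ∧ IsArc P b ∧ a.1 < b.1 ∧ b.2 + 1 = a.2

/-- The number of left crossings: pairs of arcs `(i₁, j₁)`, `(i₂, j₂)` with
`i₁ < i₂ < j₁ < j₂` and `i₁ + 1 = i₂`. -/
noncomputable def numLeftCrossings {n : ℕ} (P : Finpartition (Finset.Icc 1 n)) : ℕ :=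
  {p : (ℕ × ℕ) × (ℕ × ℕ) |
    IsArc P p.1 ∧ IsArc P p.2 ∧ p.1.1 + 1 = p.2.1 ∧ p.2.1 < p.1.2 ∧ p.1.2 < p.2.2}.ncard

/-- The number of transients: elements of a block that are neither the minimum
nor the maximum of their block. -/
noncomputable def numTransients {n : ℕ} (P : Finpartition (Finset.Icc 1 n)) : ℕ :=
  {x : ℕ | ∃ B ∈ P.parts, x ∈ B ∧ (∃ y ∈ B, y < x) ∧ (∃ y ∈ B, x < y)}.ncard

/-- `Pnum n k`: the number of partial matchings of `[n]` with exactly `k` arcs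
and no neighbor alignments. -/
noncomputable def Pnum (n k : ℕ) : ℕ :=
  {P : Finpartition (Finset.Icc 1 n) |
    IsMatching P ∧ numArcs P = k ∧ ¬ HasNbrAlign P}.ncard

/-- `Qnum n k`: the number of partial matchings of `[n]` with exactly `k` arcs,
no neighbor alignments and no left nestings. -/
noncomputable def Qnum (n k : ℕ) : ℕ :=
  {P : Finpartition (Finset.Icc 1 n) |
    IsMatching P ∧ numArcs P = k ∧ ¬ HasNbrAlign P ∧ ¬ HasLeftNesting P}.ncard

/-- `Rnum n k`: the number of partial matchings of `[n]` with exactly `k` arcs,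
no neighbor alignments, no left nestings and no right nestings. -/
noncomputable def Rnum (n k : ℕ) : ℕ :=
  {P : Finpartition (Finset.Icc 1 n) |
    IsMatching P ∧ numArcs P = k ∧ ¬ HasNbrAlign P ∧ ¬ HasLeftNesting P ∧
      ¬ HasRightNesting P}.ncard

/-- `Tnum n k`: the number of set partitions of `[n]` with exactly `k` arcs and
no right nestings. -/
noncomputable def Tnum (n k : ℕ) : ℕ :=
  {P : Finpartition (Finset.Icc 1 n) | numArcs P = k ∧ ¬ HasRightNesting P}.ncard

/-- `Stirling m b`: the Stirling number of the second kind, the number of set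
partitions of `{1, ..., m}` into `b` blocks. -/
noncomputable def Stirling (m b : ℕ) : ℕ :=
  {P : Finpartition (Finset.Icc 1 m) | P.parts.card = b}.ncard

/-!
A partial matching of `[n]` is determined by its set of arcs, so `Pnum n k` counts arc sets.
In an alignment-free matching of `[m + 2]` with `k + 1` arcs, either `m + 2` is unmatched,
leaving such a matching of `[m + 1]`, or it is matched with some `i`. In the latter case,
deleting the arc `(i, m + 2)` and closing the gap at `i` leaves an alignment-free matching of
`[m]` with `k` arcs; conversely, `i` can be reinserted at any of the `m + 1` positions except the
`k` positions directly after a right endpoint, where it would create an alignment. Hence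
`P(m + 2, k + 1) = P(m + 1, k + 1) + (m + 1 - k) P(m, k)`.
-/

namespace PartialMatching

structure IsMatchingArcs (n : ℕ) (A : Finset (ℕ × ℕ)) : Prop where
  bounds : ∀ p ∈ A, 1 ≤ p.1 ∧ p.1 < p.2 ∧ p.2 ≤ n
  disjoint : ∀ p ∈ A, ∀ q ∈ A, p ≠ q → p.1 ≠ q.1 ∧ p.1 ≠ q.2 ∧ p.2 ≠ q.1 ∧ p.2 ≠ q.2

structure IsAlignFreeMatching (n : ℕ) (A : Finset (ℕ × ℕ)) : Prop extends IsMatchingArcs n A where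
  noAlign : ∀ p ∈ A, ∀ q ∈ A, p.2 + 1 ≠ q.1

theorem isAlignFreeMatching_iff {n : ℕ} {A : Finset (ℕ × ℕ)} :
    IsAlignFreeMatching n A ↔ (∀ p ∈ A, 1 ≤ p.1 ∧ p.1 < p.2 ∧ p.2 ≤ n) ∧
      (∀ p ∈ A, ∀ q ∈ A, p ≠ q → p.1 ≠ q.1 ∧ p.1 ≠ q.2 ∧ p.2 ≠ q.1 ∧ p.2 ≠ q.2) ∧
      (∀ p ∈ A, ∀ q ∈ A, p.2 + 1 ≠ q.1) :=
  ⟨fun h => ⟨h.bounds, h.disjoint, h.noAlign⟩, fun ⟨h₁, h₂, h₃⟩ => ⟨⟨h₁, h₂⟩, h₃⟩⟩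

instance (n : ℕ) : DecidablePred (IsAlignFreeMatching n) :=
  fun _ => decidable_of_iff' _ isAlignFreeMatching_iff

def alignFreeMatchings (n k : ℕ) : Finset (Finset (ℕ × ℕ)) :=
  (Icc 1 n ×ˢ Icc 1 n).powerset.filter fun A => IsAlignFreeMatching n A ∧ #A = k

theorem mem_alignFreeMatchings {n k : ℕ} {A : Finset (ℕ × ℕ)} :
    A ∈ alignFreeMatchings n k ↔ IsAlignFreeMatching n A ∧ #A = k := by
  refine mem_filter.trans (and_iff_right_of_imp fun ⟨h, _⟩ => mem_powerset.2 fun p hp => ?_)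
  have := h.bounds p hp
  simp only [mem_product, mem_Icc]
  omega

/-- The positions where a new left endpoint can be inserted into a matching of `[m]` without
creating a neighbor alignment. -/
def freeSlots (m : ℕ) (M : Finset (ℕ × ℕ)) : Finset ℕ :=
  Icc 1 (m + 1) \ M.image fun p => p.2 + 1

theorem card_freeSlots {m : ℕ} {M : Finset (ℕ × ℕ)} (h : IsAlignFreeMatching m M) :
    #(freeSlots m M) = m + 1 - #M := by
  have hsub : M.image (fun p => p.2 + 1) ⊆ Icc 1 (m + 1) := by
    intro x hx
    obtain ⟨p, hp, rfl⟩ := mem_image.1 hx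
    have := h.bounds p hp
    simp only [mem_Icc]
    omega
  have hinj : Set.InjOn (fun p : ℕ × ℕ => p.2 + 1) M := by
    intro p hp q hq hpq
    by_contra hne
    exact (h.disjoint p hp q hq hne).2.2.2 (by simpa using hpq)
  rw [freeSlots, card_sdiff_of_subset hsub, card_image_of_injOn hinj, Nat.card_Icc]
  rfl

def shiftUp (i x : ℕ) : ℕ := if x < i then x else x + 1

def shiftDown (i x : ℕ) : ℕ := if x < i then x else x - 1

theorem shiftUp_ne (i x : ℕ) : shiftUp i x ≠ i := by
  unfold shiftUp; split <;> omega

theorem shiftUp_injective (i : ℕ) : Function.Injective (shiftUp i) := by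
  intro x y; unfold shiftUp; split_ifs <;> omega

theorem shiftDown_shiftUp (i x : ℕ) : shiftDown i (shiftUp i x) = x := by
  unfold shiftUp shiftDown; split_ifs <;> omega

theorem shiftUp_shiftDown {i x : ℕ} (h : x ≠ i) : shiftUp i (shiftDown i x) = x := by
  unfold shiftUp shiftDown; split_ifs <;> omega

def addArc (i n : ℕ) (M : Finset (ℕ × ℕ)) : Finset (ℕ × ℕ) :=
  insert (i, n) (M.image (Prod.map (shiftUp i) (shiftUp i)))

def removeArc (i n : ℕ) (A : Finset (ℕ × ℕ)) : Finset (ℕ × ℕ) :=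
  (A.erase (i, n)).image (Prod.map (shiftDown i) (shiftDown i))

theorem pair_notMem_image_shiftUp (i n : ℕ) (M : Finset (ℕ × ℕ)) :
    (i, n) ∉ M.image (Prod.map (shiftUp i) (shiftUp i)) := by
  simp only [mem_image, Prod.map, Prod.mk.injEq, not_exists, not_and]
  exact fun p _ h _ => shiftUp_ne i p.1 h

theorem card_addArc (i n : ℕ) (M : Finset (ℕ × ℕ)) : #(addArc i n M) = #M + 1 := by
  rw [addArc, card_insert_of_notMem (pair_notMem_image_shiftUp i n M),
    card_image_of_injective _ ((shiftUp_injective i).prodMap (shiftUp_injective i))]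

theorem removeArc_addArc (i n : ℕ) (M : Finset (ℕ × ℕ)) : removeArc i n (addArc i n M) = M := by
  rw [removeArc, addArc, erase_insert (pair_notMem_image_shiftUp i n M), image_image]
  convert image_id (s := M)
  ext p <;> simp [shiftDown_shiftUp]

theorem addArc_removeArc {n i : ℕ} {A : Finset (ℕ × ℕ)} (h : IsAlignFreeMatching n A)
    (hA : (i, n) ∈ A) : addArc i n (removeArc i n A) = A := by
  rw [addArc, removeArc, image_image]
  conv_rhs => rw [← insert_erase hA, ← image_id (s := A.erase (i, n))]
  refine congrArg _ (image_congr fun p hp => ?_)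
  have hd := h.disjoint p (mem_of_mem_erase hp) _ hA (ne_of_mem_erase hp)
  exact Prod.ext (shiftUp_shiftDown hd.1) (shiftUp_shiftDown hd.2.2.1)

theorem shiftUp_add_one_ne {i x y : ℕ} (h : x + 1 ≠ y) : shiftUp i x + 1 ≠ shiftUp i y := by
  unfold shiftUp; split_ifs <;> omega

theorem isAlignFreeMatching_addArc {m i : ℕ} {M : Finset (ℕ × ℕ)} (h : IsAlignFreeMatching m M)
    (hi : i ∈ freeSlots m M) : IsAlignFreeMatching (m + 2) (addArc i (m + 2) M) := by
  simp only [freeSlots, mem_sdiff, mem_Icc, mem_image, not_exists, not_and] at hi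
  obtain ⟨⟨hi₁, hi₂⟩, hfree⟩ := hi
  have hshift : ∀ p ∈ M, 1 ≤ shiftUp i p.1 ∧ shiftUp i p.1 < shiftUp i p.2 ∧
      shiftUp i p.2 ≤ m + 1 ∧ shiftUp i p.1 ≠ i ∧ shiftUp i p.2 ≠ i ∧ shiftUp i p.2 + 1 ≠ i := by
    intro p hp
    have := h.bounds p hp
    have := hfree p hp
    unfold shiftUp; split_ifs <;> omega
  refine ⟨⟨?_, ?_⟩, ?_⟩ <;> simp only [addArc, forall_mem_insert, forall_mem_image,
    Prod.map_fst, Prod.map_snd, ne_eq, (shiftUp_injective i).eq_iff]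
  · exact ⟨by omega, fun p hp => by have := hshift p hp; omega⟩
  · refine ⟨⟨by simp, fun p hp _ => by have := hshift p hp; omega⟩, fun p hp =>
      ⟨fun _ => by have := hshift p hp; omega, fun q hq hpq => ?_⟩⟩
    exact h.disjoint p hp q hq fun hpq' => hpq (hpq' ▸ rfl)
  · exact ⟨⟨by omega, fun q hq => by have := hshift q hq; omega⟩,
      fun p hp => ⟨(hshift p hp).2.2.2.2.2, fun q hq => shiftUp_add_one_ne (h.noAlign p hp q hq)⟩⟩

theorem isAlignFreeMatching_of_addArc {m i : ℕ} {M : Finset (ℕ × ℕ)}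
    (h : IsAlignFreeMatching (m + 2) (addArc i (m + 2) M)) :
    IsAlignFreeMatching m M ∧ i ∈ freeSlots m M := by
  have hnew : (i, m + 2) ∈ addArc i (m + 2) M := mem_insert_self _ _
  have hmem : ∀ p ∈ M, Prod.map (shiftUp i) (shiftUp i) p ∈ addArc i (m + 2) M :=
    fun p hp => mem_insert_of_mem (mem_image_of_mem _ hp)
  have hi := h.bounds _ hnew
  have hold : ∀ p ∈ M, 1 ≤ p.1 ∧ p.1 < p.2 ∧ p.2 ≤ m ∧ p.2 + 1 ≠ i := by
    intro p hp
    have hb := h.bounds _ (hmem p hp)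
    have hd := h.disjoint _ (hmem p hp) _ hnew (by simp [Prod.ext_iff, shiftUp_ne])
    have ha := h.noAlign _ (hmem p hp) _ hnew
    simp only [Prod.map_fst, Prod.map_snd, shiftUp] at hb hd ha
    split_ifs at hb hd ha <;> omega
  refine ⟨⟨⟨fun p hp => ?_, fun p hp q hq hpq => ?_⟩, fun p hp q hq => ?_⟩, ?_⟩
  · have := hold p hp
    omega
  · have := h.disjoint _ (hmem p hp) _ (hmem q hq)
      (((shiftUp_injective i).prodMap (shiftUp_injective i)).ne hpq)
    simpa only [Prod.map_fst, Prod.map_snd, (shiftUp_injective i).ne_iff] using this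
  · have ha := h.noAlign _ (hmem p hp) _ (hmem q hq)
    have := hold p hp
    simp only [Prod.map_fst, Prod.map_snd, shiftUp] at ha
    split_ifs at ha <;> omega
  · simp only [freeSlots, mem_sdiff, mem_Icc, mem_image, not_exists, not_and]
    exact ⟨by omega, fun p hp => (hold p hp).2.2.2⟩

theorem isAlignFreeMatching_addArc_iff {m i : ℕ} {M : Finset (ℕ × ℕ)} :
    IsAlignFreeMatching (m + 2) (addArc i (m + 2) M) ↔
      IsAlignFreeMatching m M ∧ i ∈ freeSlots m M :=
  ⟨isAlignFreeMatching_of_addArc, fun ⟨h, hi⟩ => isAlignFreeMatching_addArc h hi⟩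

theorem filter_forall_snd_ne_alignFreeMatchings (n k : ℕ) :
    (alignFreeMatchings (n + 1) k).filter (fun A => ∀ p ∈ A, p.2 ≠ n + 1) =
      alignFreeMatchings n k := by
  ext A
  simp only [mem_filter, mem_alignFreeMatchings]
  constructor
  · rintro ⟨⟨h, hk⟩, hA⟩
    refine ⟨⟨⟨fun p hp => ?_, h.disjoint⟩, h.noAlign⟩, hk⟩
    have := h.bounds p hp
    have := hA p hp
    omega
  · rintro ⟨h, hk⟩
    refine ⟨⟨⟨⟨fun p hp => ?_, h.disjoint⟩, h.noAlign⟩, hk⟩, fun p hp => ?_⟩ <;>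
    · have := h.bounds p hp
      omega

theorem filter_not_forall_snd_ne_alignFreeMatchings (m k : ℕ) :
    (alignFreeMatchings (m + 2) (k + 1)).filter (fun A => ¬ ∀ p ∈ A, p.2 ≠ m + 2) =
      ((alignFreeMatchings m k).sigma (freeSlots m)).image fun x => addArc x.2 (m + 2) x.1 := by
  ext A
  simp only [mem_filter, mem_image, mem_sigma, mem_alignFreeMatchings, Sigma.exists]
  constructor
  · rintro ⟨⟨h, hk⟩, hA⟩
    push Not at hA
    obtain ⟨⟨i, _⟩, hiA, rfl⟩ := hA
    have hA := addArc_removeArc h hiA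
    rw [← hA, isAlignFreeMatching_addArc_iff] at h
    rw [← hA, card_addArc] at hk
    exact ⟨_, i, ⟨⟨h.1, by omega⟩, h.2⟩, hA⟩
  · rintro ⟨M, i, ⟨⟨hM, hk⟩, hi⟩, rfl⟩
    exact ⟨⟨isAlignFreeMatching_addArc hM hi, by rw [card_addArc, hk]⟩,
      fun h => h _ (mem_insert_self _ _) rfl⟩

theorem injOn_addArc (m k : ℕ) :
    Set.InjOn (fun x : (_ : Finset (ℕ × ℕ)) × ℕ => addArc x.2 (m + 2) x.1)
      ((alignFreeMatchings m k).sigma (freeSlots m)) := by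
  rintro ⟨M, i⟩ - ⟨M', j⟩ hj (he : addArc i (m + 2) M = addArc j (m + 2) M')
  simp only [coe_sigma, Set.mem_sigma_iff, mem_coe, mem_alignFreeMatchings] at hj
  have h := isAlignFreeMatching_addArc hj.1.1 hj.2
  obtain rfl : i = j := by
    by_contra hij
    have hi : (i, m + 2) ∈ addArc j (m + 2) M' := he ▸ mem_insert_self _ _
    exact (h.disjoint _ hi _ (mem_insert_self _ _) (by simpa using hij)).2.2.2 rfl
  rw [← removeArc_addArc i (m + 2) M, he, removeArc_addArc]

theorem card_alignFreeMatchings_add_two (m k : ℕ) :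
    #(alignFreeMatchings (m + 2) (k + 1)) =
      #(alignFreeMatchings (m + 1) (k + 1)) + (m + 1 - k) * #(alignFreeMatchings m k) := by
  rw [← card_filter_add_card_filter_not (fun A => ∀ p ∈ A, p.2 ≠ m + 2),
    filter_forall_snd_ne_alignFreeMatchings, filter_not_forall_snd_ne_alignFreeMatchings,
    card_image_of_injOn (injOn_addArc m k), card_sigma,
    sum_const_nat fun M hM => ?_, mul_comm]
  obtain ⟨h, rfl⟩ := mem_alignFreeMatchings.1 hM
  exact card_freeSlots h

theorem eq_of_pair_eq_pair {a b c d : ℕ} (hab : a < b) (hcd : c < d)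
    (h : ({a, b} : Finset ℕ) = {c, d}) : (a, b) = (c, d) := by
  have ha : a ∈ ({c, d} : Finset ℕ) := h ▸ by simp
  have hb : b ∈ ({c, d} : Finset ℕ) := h ▸ by simp
  have hc : c ∈ ({a, b} : Finset ℕ) := h ▸ by simp
  simp only [mem_insert, mem_singleton] at ha hb hc
  ext <;> omega

section Partitions

variable {n : ℕ}

def arcsOf (P : Finpartition (Icc 1 n)) : Finset (ℕ × ℕ) :=
  (Icc 1 n ×ˢ Icc 1 n).filter fun p => p.1 < p.2 ∧ {p.1, p.2} ∈ P.parts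

theorem mem_arcsOf {P : Finpartition (Icc 1 n)} {p : ℕ × ℕ} :
    p ∈ arcsOf P ↔ p.1 < p.2 ∧ {p.1, p.2} ∈ P.parts :=
  mem_filter.trans <| and_iff_right_of_imp fun ⟨_, hB⟩ =>
    mem_product.2 ⟨P.le hB (by simp), P.le hB (by simp)⟩

theorem isMatchingArcs_arcsOf (P : Finpartition (Icc 1 n)) : IsMatchingArcs n (arcsOf P) where
  bounds p hp := by
    obtain ⟨hlt, hB⟩ := mem_arcsOf.1 hp
    have h₁ := mem_Icc.1 (P.le hB (by simp : p.1 ∈ {p.1, p.2}))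
    have h₂ := mem_Icc.1 (P.le hB (by simp : p.2 ∈ {p.1, p.2}))
    omega
  disjoint p hp q hq hpq := by
    obtain ⟨hp₁, hp₂⟩ := mem_arcsOf.1 hp
    obtain ⟨hq₁, hq₂⟩ := mem_arcsOf.1 hq
    have hshared : ∀ x ∈ ({p.1, p.2} : Finset ℕ), x ∉ ({q.1, q.2} : Finset ℕ) := fun x hxp hxq =>
      hpq (eq_of_pair_eq_pair hp₁ hq₁ (P.eq_of_mem_parts hp₂ hq₂ hxp hxq))
    simp only [mem_insert, mem_singleton] at hshared
    refine ⟨?_, ?_, ?_, ?_⟩ <;> intro h <;> simp [h] at hshared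

theorem isArc_iff_mem_arcsOf {P : Finpartition (Icc 1 n)} (hM : IsMatching P) {p : ℕ × ℕ} :
    IsArc P p ↔ p ∈ arcsOf P := by
  rw [mem_arcsOf]
  constructor
  · rintro ⟨hlt, B, hB, h₁, h₂, -⟩
    have hsub : {p.1, p.2} ⊆ B := insert_subset h₁ (singleton_subset_iff.2 h₂)
    rw [eq_of_subset_of_card_le hsub ((card_pair hlt.ne).symm ▸ hM B hB)]
    exact ⟨hlt, hB⟩
  · rintro ⟨hlt, hB⟩
    refine ⟨hlt, _, hB, by simp, by simp, fun c hc => ?_⟩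
    simp only [mem_insert, mem_singleton] at hc
    omega

theorem numArcs_eq_card_arcsOf {P : Finpartition (Icc 1 n)} (hM : IsMatching P) :
    numArcs P = #(arcsOf P) := by
  rw [numArcs, ← Set.ncard_coe_finset]
  exact congrArg _ (Set.ext fun _ => isArc_iff_mem_arcsOf hM)

theorem hasNbrAlign_iff_arcsOf {P : Finpartition (Icc 1 n)} (hM : IsMatching P) :
    HasNbrAlign P ↔ ∃ p ∈ arcsOf P, ∃ q ∈ arcsOf P, p.2 + 1 = q.1 := by
  simp only [HasNbrAlign, isArc_iff_mem_arcsOf hM, exists_and_left]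

theorem eq_pair_or_singleton_of_mem_parts {P : Finpartition (Icc 1 n)} (hM : IsMatching P)
    {B : Finset ℕ} (hB : B ∈ P.parts) : (∃ p ∈ arcsOf P, B = {p.1, p.2}) ∨ ∃ x, B = {x} := by
  have hpos := (P.nonempty_of_mem_parts hB).card_pos
  have hle := hM B hB
  interval_cases h : #B
  · exact .inr (card_eq_one.1 h)
  · obtain ⟨a, b, hab, rfl⟩ := card_eq_two.1 h
    rcases Nat.lt_or_gt_of_ne hab with hlt | hlt
    · exact .inl ⟨(a, b), mem_arcsOf.2 ⟨hlt, hB⟩, rfl⟩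
    · rw [pair_comm] at hB ⊢
      exact .inl ⟨(b, a), mem_arcsOf.2 ⟨hlt, hB⟩, rfl⟩

theorem singleton_mem_parts_iff {P : Finpartition (Icc 1 n)} (hM : IsMatching P)
    {x : ℕ} (hx : x ∈ Icc 1 n) : {x} ∈ P.parts ↔ ∀ p ∈ arcsOf P, x ≠ p.1 ∧ x ≠ p.2 := by
  constructor
  · intro hx p hp
    obtain ⟨hlt, hB⟩ := mem_arcsOf.1 hp
    have hxp : ∀ y ∈ ({p.1, p.2} : Finset ℕ), x ≠ y := by
      rintro y hy rfl
      have := congrArg card (P.eq_of_mem_parts hx hB (mem_singleton_self x) hy)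
      rw [card_singleton, card_pair hlt.ne] at this
      omega
    exact ⟨hxp _ (by simp), hxp _ (by simp)⟩
  · intro hfree
    obtain ⟨B, hB, hxB⟩ := P.exists_mem hx
    rcases eq_pair_or_singleton_of_mem_parts hM hB with ⟨p, hp, rfl⟩ | ⟨y, rfl⟩
    · have := hfree p hp
      simp only [mem_insert, mem_singleton] at hxB
      omega
    · rwa [mem_singleton.1 hxB]

theorem isAlignFreeMatching_arcsOf_iff {P : Finpartition (Icc 1 n)} (hM : IsMatching P) :
    IsAlignFreeMatching n (arcsOf P) ↔ ¬ HasNbrAlign P := by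
  simp only [hasNbrAlign_iff_arcsOf hM, not_exists, not_and]
  exact ⟨fun h => h.noAlign, fun h => ⟨isMatchingArcs_arcsOf P, h⟩⟩

def blocksOf (n : ℕ) (A : Finset (ℕ × ℕ)) : Finset (Finset ℕ) :=
  A.image (fun p => {p.1, p.2}) ∪
    ((Icc 1 n).filter fun x => ∀ p ∈ A, x ≠ p.1 ∧ x ≠ p.2).image singleton

theorem mem_blocksOf {A : Finset (ℕ × ℕ)} {B : Finset ℕ} :
    B ∈ blocksOf n A ↔ (∃ p ∈ A, {p.1, p.2} = B) ∨
      ∃ x, (x ∈ Icc 1 n ∧ ∀ p ∈ A, x ≠ p.1 ∧ x ≠ p.2) ∧ {x} = B := by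
  simp only [blocksOf, mem_union, mem_image, mem_filter]

theorem exists_mem_blocksOf (A : Finset (ℕ × ℕ)) {x : ℕ} (hx : x ∈ Icc 1 n) :
    ∃ B ∈ blocksOf n A, x ∈ B := by
  by_cases hend : ∃ p ∈ A, x = p.1 ∨ x = p.2
  · obtain ⟨p, hp, hxp⟩ := hend
    exact ⟨_, mem_blocksOf.2 (.inl ⟨p, hp, rfl⟩), by simpa using hxp⟩
  · push Not at hend
    exact ⟨{x}, mem_blocksOf.2 (.inr ⟨x, ⟨hx, hend⟩, rfl⟩), mem_singleton_self x⟩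

theorem IsMatchingArcs.eq_of_mem_blocksOf {A : Finset (ℕ × ℕ)} (h : IsMatchingArcs n A)
    {B C : Finset ℕ} (hB : B ∈ blocksOf n A) (hC : C ∈ blocksOf n A) {x : ℕ} (hxB : x ∈ B)
    (hxC : x ∈ C) : B = C := by
  rw [mem_blocksOf] at hB hC
  rcases hB with ⟨p, hp, rfl⟩ | ⟨y, ⟨-, hy⟩, rfl⟩ <;>
    rcases hC with ⟨q, hq, rfl⟩ | ⟨z, ⟨-, hz⟩, rfl⟩ <;>
    simp only [mem_insert, mem_singleton] at hxB hxC
  · obtain rfl : p = q := by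
      by_contra hpq
      have := h.disjoint p hp q hq hpq
      omega
    rfl
  · have := hz p hp
    omega
  · have := hy q hq
    omega
  · rw [← hxB, hxC]

def IsMatchingArcs.toFinpartition {A : Finset (ℕ × ℕ)} (h : IsMatchingArcs n A) :
    Finpartition (Icc 1 n) :=
  .ofExistsUnique (blocksOf n A)
    (fun B hB x hx => by
      rcases mem_blocksOf.1 hB with ⟨p, hp, rfl⟩ | ⟨y, ⟨hy, -⟩, rfl⟩
      · have := h.bounds p hp
        simp only [mem_insert, mem_singleton] at hx
        simp only [mem_Icc]
        omega
      · rwa [mem_singleton.1 hx])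
    (fun x hx => by
      obtain ⟨B, hB, hxB⟩ := exists_mem_blocksOf A hx
      exact ⟨B, ⟨hB, hxB⟩, fun C ⟨hC, hxC⟩ => h.eq_of_mem_blocksOf hC hB hxC hxB⟩)
    (fun h₀ => by
      rcases mem_blocksOf.1 h₀ with ⟨p, -, hp⟩ | ⟨x, -, hx⟩
      · simpa using congrArg (p.1 ∈ ·) hp
      · simpa using congrArg (x ∈ ·) hx)

theorem IsMatchingArcs.arcsOf_toFinpartition {A : Finset (ℕ × ℕ)} (h : IsMatchingArcs n A) :
    arcsOf h.toFinpartition = A := by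
  ext q
  simp only [mem_arcsOf, toFinpartition, Finpartition.ofExistsUnique_parts, mem_blocksOf]
  constructor
  · rintro ⟨hq, ⟨p, hp, he⟩ | ⟨x, -, he⟩⟩
    · obtain rfl : p = q := eq_of_pair_eq_pair (h.bounds p hp).2.1 hq he
      exact hp
    · have := congrArg card he
      rw [card_singleton, card_pair hq.ne] at this
      omega
  · intro hq
    exact ⟨(h.bounds q hq).2.1, .inl ⟨q, hq, rfl⟩⟩

theorem IsMatchingArcs.isMatching_toFinpartition {A : Finset (ℕ × ℕ)} (h : IsMatchingArcs n A) :
    IsMatching h.toFinpartition := by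
  intro B hB
  simp only [toFinpartition, Finpartition.ofExistsUnique_parts, mem_blocksOf] at hB
  rcases hB with ⟨p, -, rfl⟩ | ⟨x, -, rfl⟩
  · exact card_le_two
  · simp

theorem parts_eq_blocksOf_arcsOf {P : Finpartition (Icc 1 n)} (hM : IsMatching P) :
    P.parts = blocksOf n (arcsOf P) := by
  ext B
  rw [mem_blocksOf]
  constructor
  · intro hB
    rcases eq_pair_or_singleton_of_mem_parts hM hB with ⟨p, hp, rfl⟩ | ⟨x, rfl⟩
    · exact .inl ⟨p, hp, rfl⟩
    · have hx := P.le hB (mem_singleton_self x)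
      exact .inr ⟨x, ⟨hx, (singleton_mem_parts_iff hM hx).1 hB⟩, rfl⟩
  · rintro (⟨p, hp, rfl⟩ | ⟨x, ⟨hx, hfree⟩, rfl⟩)
    · exact (mem_arcsOf.1 hp).2
    · exact (singleton_mem_parts_iff hM hx).2 hfree

theorem pnum_eq_card_alignFreeMatchings (n k : ℕ) : Pnum n k = #(alignFreeMatchings n k) := by
  set S := {P : Finpartition (Icc 1 n) | IsMatching P ∧ numArcs P = k ∧ ¬ HasNbrAlign P}
  have hinj : Set.InjOn arcsOf S := fun P hP Q hQ hPQ =>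
    Finpartition.ext (by rw [parts_eq_blocksOf_arcsOf hP.1, parts_eq_blocksOf_arcsOf hQ.1, hPQ])
  have himage : arcsOf '' S = alignFreeMatchings n k := by
    ext A
    simp only [Set.mem_image, mem_coe, mem_alignFreeMatchings]
    constructor
    · rintro ⟨P, ⟨hM, hk, hA⟩, rfl⟩
      exact ⟨(isAlignFreeMatching_arcsOf_iff hM).2 hA, numArcs_eq_card_arcsOf hM ▸ hk⟩
    · rintro ⟨h, hk⟩
      have hM := h.isMatching_toFinpartition
      refine ⟨h.toFinpartition, ⟨hM, ?_, ?_⟩, h.arcsOf_toFinpartition⟩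
      · rw [numArcs_eq_card_arcsOf hM, h.arcsOf_toFinpartition, hk]
      · rw [← isAlignFreeMatching_arcsOf_iff hM, h.arcsOf_toFinpartition]
        exact h
  rw [Pnum, ← hinj.ncard_image, himage, Set.ncard_coe_finset]

end Partitions

end PartialMatching

/-- Recurrence for the number of partial matchings of `[n]` with `k` arcs and no
neighbor alignments, together with the initial values. -/
theorem stmt_0 :
    (∀ n k : ℕ, 3 ≤ n → 1 ≤ k → k ≤ n / 2 →
        Pnum n k = Pnum (n - 1) k + (n - k) * Pnum (n - 2) (k - 1)) ∧
      Pnum 1 0 = 1 ∧ Pnum 2 0 = 1 ∧ Pnum 2 1 = 1 := by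
  simp only [PartialMatching.pnum_eq_card_alignFreeMatchings]
  refine ⟨fun n k hn hk _ => ?_, by decide, by decide, by decide⟩
  obtain ⟨m, rfl⟩ : ∃ m, n = m + 2 := ⟨n - 2, by omega⟩
  obtain ⟨j, rfl⟩ : ∃ j, k = j + 1 := ⟨k - 1, by omega⟩
  simpa using PartialMatching.card_alignFreeMatchings_add_two m j
end

section
/- For all integers n ≥ 1 and 0 ≤ k ≤ ⌊n/2⌋, the number P(n,k) equals the elementary symmetric polynomial e_k(1, 2, ..., n-k), i.e. P(n,k) = Σ over all k-element subsets S of {1,...,n-k} of the product of the elements of S. -/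
open Finset

/-!
A partial matching is determined by its set of arcs. Sort the matchings of `[n + 2]` with `k + 1`
arcs and no neighbor alignment by the block of `n + 2`. Either `n + 2` is a singleton, leaving such
a matching of `[n + 1]`, or it closes an arc `(i, n + 2)`: deleting `i` and `n + 2` leaves such a
matching of `[n]` with `k` arcs in which `i - 1` is not a right endpoint, and conversely the arc can
be reinserted at every `i ∈ [1, n + 1]` not directly after one of the `k` right endpoints. Hence
`P(n + 2, k + 1) = P(n + 1, k + 1) + (n + 1 - k) P(n, k)`, which is the recurrence
`e_{k+1}(1, …, m + 1) = e_{k+1}(1, …, m) + (m + 1) e_k(1, …, m)` at `m = n - k`.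
-/

theorem Multiset.esymm_cons_succ {R : Type*} [CommSemiring R] (a : R) (s : Multiset R) (k : ℕ) :
    (a ::ₘ s).esymm (k + 1) = s.esymm (k + 1) + a * s.esymm k := by
  simp [Multiset.esymm, Multiset.powersetCard_cons, Multiset.sum_map_mul_left]

theorem Finset.sum_powersetCard_succ_insert_prod {α R : Type*} [DecidableEq α] [CommSemiring R]
    {a : α} {s : Finset α} (ha : a ∉ s) (f : α → R) (k : ℕ) :
    ∑ t ∈ (insert a s).powersetCard (k + 1), ∏ x ∈ t, f x =
      ∑ t ∈ s.powersetCard (k + 1), ∏ x ∈ t, f x +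
        f a * ∑ t ∈ s.powersetCard k, ∏ x ∈ t, f x := by
  simp only [← Finset.esymm_map_val, Finset.insert_val_of_notMem ha, Multiset.map_cons,
    Multiset.esymm_cons_succ]

theorem Finset.eq_or_eq_or_eq_of_card_le_two {α : Type*} {s : Finset α} {a b c : α}
    (hs : #s ≤ 2) (ha : a ∈ s) (hb : b ∈ s) (hc : c ∈ s) : a = b ∨ a = c ∨ b = c := by
  by_contra! h
  exact hs.not_gt (two_lt_card.2 ⟨a, ha, b, hb, c, hc, h⟩)

namespace Finpartition

variable {α : Type*} [DecidableEq α] {s : Finset α}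

lemma mem_part_comm (P : Finpartition s) {a b : α} : a ∈ P.part b ↔ b ∈ P.part a := by
  simp only [mem_part_iff_exists, and_comm]

lemma ext_of_mem_part {P Q : Finpartition s} (h : ∀ a b, b ∈ P.part a ↔ b ∈ Q.part a) :
    P = Q := by
  have hpart (a : α) : P.part a = Q.part a := Finset.ext (h a)
  have hsub {P Q : Finpartition s} (hpart : ∀ a, P.part a = Q.part a) : P.parts ⊆ Q.parts := by
    intro B hB
    obtain ⟨x, hx⟩ := P.nonempty_of_mem_parts hB
    rw [← P.part_eq_of_mem hB hx, hpart]
    exact Q.part_mem.2 (P.le hB hx)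
  exact Finpartition.ext (hsub hpart |>.antisymm (hsub fun a => (hpart a).symm))

end Finpartition

namespace Nat

/-- The increasing bijection from `ℕ` onto `ℕ \ {i}`, as `Fin.succAbove`. -/
def succAbove (i x : ℕ) : ℕ := if x < i then x else x + 1

def predAbove (i x : ℕ) : ℕ := if x ≤ i then x else x - 1

variable {i a b x : ℕ}

lemma succAbove_strictMono (i : ℕ) : StrictMono (succAbove i) := by
  intro a b h
  unfold succAbove
  split_ifs <;> omega

lemma succAbove_ne (i x : ℕ) : succAbove i x ≠ i := by
  unfold succAbove
  split_ifs <;> omega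

lemma le_succAbove (i x : ℕ) : x ≤ succAbove i x := by
  unfold succAbove
  split_ifs <;> omega

lemma succAbove_le_succ (i x : ℕ) : succAbove i x ≤ x + 1 := by
  unfold succAbove
  split_ifs <;> omega

lemma succAbove_add_one_ne (h : x + 1 ≠ i) : succAbove i x + 1 ≠ i := by
  unfold succAbove
  split_ifs <;> omega

lemma add_one_eq_of_succAbove_add_one_eq (h : succAbove i a + 1 = succAbove i b) : a + 1 = b := by
  unfold succAbove at h
  split_ifs at h <;> omega

lemma succAbove_predAbove (h : x ≠ i) : succAbove i (predAbove i x) = x := by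
  unfold succAbove predAbove
  split_ifs <;> omega

end Nat

/-- `esymmIcc m k` is `e_k(1, ..., m)`. -/
def esymmIcc (m k : ℕ) : ℕ := ∑ S ∈ (Icc 1 m).powersetCard k, ∏ x ∈ S, x

lemma esymmIcc_zero_right (m : ℕ) : esymmIcc m 0 = 1 := by
  simp [esymmIcc]

lemma esymmIcc_zero_succ (k : ℕ) : esymmIcc 0 (k + 1) = 0 := by
  simp [esymmIcc]

lemma esymmIcc_succ_succ (m k : ℕ) :
    esymmIcc (m + 1) (k + 1) = esymmIcc m (k + 1) + (m + 1) * esymmIcc m k := by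
  rw [esymmIcc, ← Finset.insert_Icc_right_eq_Icc_add_one (by omega),
    Finset.sum_powersetCard_succ_insert_prod (by simp) (fun x => x)]
  rfl

lemma esymmIcc_sub_succ_succ (n k : ℕ) :
    esymmIcc (n + 2 - (k + 1)) (k + 1) =
      esymmIcc (n + 1 - (k + 1)) (k + 1) + (n + 1 - k) * esymmIcc (n - k) k := by
  rcases le_or_gt k n with hkn | hnk
  · rw [show n + 2 - (k + 1) = n - k + 1 by omega, show n + 1 - (k + 1) = n - k by omega,
      esymmIcc_succ_succ, show n + 1 - k = n - k + 1 by omega]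
  · rw [show n + 2 - (k + 1) = 0 by omega, show n + 1 - (k + 1) = 0 by omega,
      show n + 1 - k = 0 by omega, esymmIcc_zero_succ, zero_mul, add_zero]

section ArcSets

variable {n m k i : ℕ} {M : Finset (ℕ × ℕ)}

def EndpointsDisjoint (M : Finset (ℕ × ℕ)) : Prop :=
  ∀ p ∈ M, ∀ q ∈ M, p ≠ q → p.1 ≠ q.1 ∧ p.1 ≠ q.2 ∧ p.2 ≠ q.1 ∧ p.2 ≠ q.2

/-- `M` is the set of arcs of a partial matching of `{1, ..., n}`. -/
structure IsArcSet (n : ℕ) (M : Finset (ℕ × ℕ)) : Prop where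
  bounds : ∀ p ∈ M, 1 ≤ p.1 ∧ p.1 < p.2 ∧ p.2 ≤ n
  disjoint : EndpointsDisjoint M

def NoAlign (M : Finset (ℕ × ℕ)) : Prop :=
  ∀ p ∈ M, ∀ q ∈ M, p.2 + 1 ≠ q.1

open Classical in
noncomputable def alignFreeArcSets (n k : ℕ) : Finset (Finset (ℕ × ℕ)) :=
  (Icc 1 n ×ˢ Icc 1 n).powerset.filter fun M => IsArcSet n M ∧ NoAlign M ∧ #M = k

lemma mem_alignFreeArcSets :
    M ∈ alignFreeArcSets n k ↔ IsArcSet n M ∧ NoAlign M ∧ #M = k := by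
  classical
  simp only [alignFreeArcSets, mem_filter, mem_powerset, and_iff_right_iff_imp]
  intro hM p hp
  have := hM.1.bounds p hp
  simp only [mem_product, mem_Icc]
  omega

lemma alignFreeArcSets_zero_right (n : ℕ) : alignFreeArcSets n 0 = {∅} := by
  ext M
  rw [mem_alignFreeArcSets, mem_singleton, card_eq_zero]
  constructor
  · exact fun h => h.2.2
  · rintro rfl
    exact ⟨⟨by simp, by simp [EndpointsDisjoint]⟩, by simp [NoAlign], rfl⟩

lemma alignFreeArcSets_succ_of_le_one (hn : n ≤ 1) : alignFreeArcSets n (k + 1) = ∅ := by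
  refine eq_empty_of_forall_notMem fun M hM => ?_
  obtain ⟨hM, -, hcard⟩ := mem_alignFreeArcSets.1 hM
  obtain ⟨p, hp⟩ := card_pos.1 (by omega : 0 < #M)
  have := hM.bounds p hp
  omega

lemma IsArcSet.mono (hM : IsArcSet n M) (h : n ≤ m) : IsArcSet m M :=
  ⟨fun p hp => by have := hM.bounds p hp; omega, hM.disjoint⟩

lemma IsArcSet.insert {p : ℕ × ℕ} (hM : IsArcSet n M)
    (hp : 1 ≤ p.1 ∧ p.1 < p.2 ∧ p.2 ≤ n)
    (hfresh : ∀ q ∈ M, p.1 ≠ q.1 ∧ p.1 ≠ q.2 ∧ p.2 ≠ q.1 ∧ p.2 ≠ q.2) :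
    IsArcSet n (insert p M) := by
  refine ⟨forall_mem_insert .. |>.2 ⟨hp, hM.bounds⟩, ?_⟩
  simp only [EndpointsDisjoint, forall_mem_insert]
  refine ⟨⟨fun h => absurd rfl h, fun q hq _ => hfresh q hq⟩,
    fun q hq => ⟨fun _ => ?_, ?_⟩⟩
  · have := hfresh q hq
    omega
  · exact hM.disjoint q hq

lemma IsArcSet.image_succAbove (hM : IsArcSet n M) (i : ℕ) :
    IsArcSet (n + 1) (M.image (Prod.map (Nat.succAbove i) (Nat.succAbove i))) := by
  have hinj := (Nat.succAbove_strictMono i).injective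
  refine ⟨forall_mem_image.2 fun p hp => ?_, ?_⟩
  · have hp' := hM.bounds p hp
    have := Nat.le_succAbove i p.1
    have := Nat.succAbove_le_succ i p.2
    have := Nat.succAbove_strictMono i hp'.2.1
    simp only [Prod.map_fst, Prod.map_snd]
    omega
  · simp only [EndpointsDisjoint, forall_mem_image, Prod.map_fst, Prod.map_snd, ne_eq,
      hinj.eq_iff]
    intro p hp q hq hpq
    exact hM.disjoint p hp q hq (fun h => hpq (h ▸ rfl))

lemma NoAlign.insert {p : ℕ × ℕ} (hM : NoAlign M) (hp : p.2 + 1 ≠ p.1)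
    (hfresh : ∀ q ∈ M, p.2 + 1 ≠ q.1 ∧ q.2 + 1 ≠ p.1) : NoAlign (insert p M) := by
  simp only [NoAlign, forall_mem_insert]
  exact ⟨⟨hp, fun q hq => (hfresh q hq).1⟩, fun q hq => ⟨(hfresh q hq).2, hM q hq⟩⟩

lemma NoAlign.image_succAbove (hM : NoAlign M) (i : ℕ) :
    NoAlign (M.image (Prod.map (Nat.succAbove i) (Nat.succAbove i))) := by
  simp only [NoAlign, forall_mem_image, Prod.map_fst, Prod.map_snd]
  exact fun p hp q hq h => hM p hp q hq (Nat.add_one_eq_of_succAbove_add_one_eq h)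

lemma IsArcSet.image_predAbove (hM : IsArcSet (n + 1) M) (hi : i ∈ Icc 1 (n + 1))
    (hMi : ∀ q ∈ M, q.1 ≠ i ∧ q.2 ≠ i) :
    IsArcSet n (M.image (Prod.map (Nat.predAbove i) (Nat.predAbove i))) := by
  rw [mem_Icc] at hi
  refine ⟨forall_mem_image.2 fun q hq => ?_, ?_⟩
  · have := hM.bounds q hq
    have := hMi q hq
    simp only [Prod.map_fst, Prod.map_snd, Nat.predAbove]
    split_ifs <;> omega
  · simp only [EndpointsDisjoint, forall_mem_image, Prod.map_fst, Prod.map_snd]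
    intro p hp q hq hpq
    have := hM.disjoint p hp q hq (by rintro rfl; exact hpq rfl)
    have := hMi p hp
    have := hMi q hq
    simp only [Nat.predAbove]
    split_ifs <;> omega

lemma NoAlign.image_predAbove (hM : NoAlign M)
    (hMi : ∀ q ∈ M, q.1 ≠ i ∧ q.2 ≠ i ∧ q.2 + 1 ≠ i) :
    NoAlign (M.image (Prod.map (Nat.predAbove i) (Nat.predAbove i))) := by
  simp only [NoAlign, forall_mem_image, Prod.map_fst, Prod.map_snd]
  intro p hp q hq
  have := hM p hp q hq
  have := hMi p hp
  have := hMi q hq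
  simp only [Nat.predAbove]
  split_ifs <;> omega

lemma EndpointsDisjoint.eq_of_mem_arc (hM : EndpointsDisjoint M) {x u v : ℕ}
    (hu : (x, u) ∈ M ∨ (u, x) ∈ M) (hv : (x, v) ∈ M ∨ (v, x) ∈ M) : u = v := by
  rcases hu with hu | hu <;> rcases hv with hv | hv <;>
  · by_contra huv
    have := hM _ hu _ hv fun h => huv (by simp only [Prod.ext_iff] at h; omega)
    simp at this

def addTopArc (n i : ℕ) (M : Finset (ℕ × ℕ)) : Finset (ℕ × ℕ) :=
  insert (i, n + 2) (M.image (Prod.map (Nat.succAbove i) (Nat.succAbove i)))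

lemma topArc_notMem_image (hM : IsArcSet n M) (i j : ℕ) :
    (j, n + 2) ∉ M.image (Prod.map (Nat.succAbove i) (Nat.succAbove i)) := fun h => by
  have := (hM.image_succAbove i).bounds _ h
  omega

lemma isArcSet_addTopArc (hM : IsArcSet n M) (hi : i ∈ Icc 1 (n + 1)) :
    IsArcSet (n + 2) (addTopArc n i M) := by
  rw [mem_Icc] at hi
  refine ((hM.image_succAbove i).mono (by omega)).insert (by omega) ?_
  simp only [forall_mem_image, Prod.map_fst, Prod.map_snd]
  intro q hq
  have := Nat.succAbove_le_succ i q.1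
  have := Nat.succAbove_le_succ i q.2
  have := hM.bounds q hq
  exact ⟨(Nat.succAbove_ne i q.1).symm, (Nat.succAbove_ne i q.2).symm, by omega, by omega⟩

lemma noAlign_addTopArc (hM : IsArcSet n M) (hA : NoAlign M) (hi : i ≤ n + 1)
    (hgap : i ∉ M.image (·.2 + 1)) : NoAlign (addTopArc n i M) := by
  refine (hA.image_succAbove i).insert (by omega) ?_
  simp only [forall_mem_image, Prod.map_fst, Prod.map_snd]
  intro q hq
  have := Nat.succAbove_le_succ i q.1
  have := hM.bounds q hq
  exact ⟨by omega, Nat.succAbove_add_one_ne fun h => hgap (mem_image.2 ⟨q, hq, h⟩)⟩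

lemma card_addTopArc (hM : IsArcSet n M) (i : ℕ) : #(addTopArc n i M) = #M + 1 := by
  have hinj := (Nat.succAbove_strictMono i).injective
  rw [addTopArc, card_insert_of_notMem (topArc_notMem_image hM i i),
    card_image_of_injective _ (hinj.prodMap hinj)]

lemma addTopArc_inj {M' : Finset (ℕ × ℕ)} {i' : ℕ} (hM : IsArcSet n M) (hM' : IsArcSet n M')
    (h : addTopArc n i M = addTopArc n i' M') : i = i' ∧ M = M' := by
  have hi : i = i' := by
    have : (i, n + 2) ∈ addTopArc n i' M' := h ▸ mem_insert_self _ _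
    rcases mem_insert.1 this with h | h
    · exact (Prod.ext_iff.1 h).1
    · exact absurd h (topArc_notMem_image hM' i' i)
  subst hi
  have hinj := (Nat.succAbove_strictMono i).injective
  refine ⟨rfl, image_injective (hinj.prodMap hinj) ?_⟩
  simpa [addTopArc, erase_insert (topArc_notMem_image hM i i),
    erase_insert (topArc_notMem_image hM' i i)] using congrArg (erase · (i, n + 2)) h

lemma card_sdiff_image_snd_add_one (hM : IsArcSet n M) :
    #(Icc 1 (n + 1) \ M.image (·.2 + 1)) = n + 1 - #M := by
  have hsub : M.image (·.2 + 1) ⊆ Icc 1 (n + 1) := by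
    simp only [subset_iff, forall_mem_image, mem_Icc]
    intro p hp
    have := hM.bounds p hp
    omega
  have hinj : Set.InjOn (·.2 + 1) (M : Set (ℕ × ℕ)) := by
    intro p hp q hq h
    by_contra hpq
    have := hM.disjoint p hp q hq hpq
    simp only at h
    omega
  rw [card_sdiff_of_subset hsub, card_image_of_injOn hinj, Nat.card_Icc, Nat.add_sub_cancel]

lemma exists_addTopArc_eq (hM : IsArcSet (n + 2) M) (hA : NoAlign M) (hi : (i, n + 2) ∈ M) :
    ∃ M', IsArcSet n M' ∧ NoAlign M' ∧ #M' + 1 = #M ∧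
      i ∈ Icc 1 (n + 1) \ M'.image (·.2 + 1) ∧ addTopArc n i M' = M := by
  set E := M.erase (i, n + 2)
  have hE : ∀ q ∈ E, q.2 ≤ n + 1 ∧ q.1 ≠ i ∧ q.2 ≠ i ∧ q.2 + 1 ≠ i := by
    intro q hq
    obtain ⟨hqi, hqM⟩ := mem_erase.1 hq
    have := hM.bounds q hqM
    have := hM.disjoint q hqM _ hi hqi
    have := hA q hqM _ hi
    simp only at *
    omega
  have hEarc : IsArcSet (n + 1) E := by
    refine ⟨fun q hq => ?_, fun p hp q hq => hM.disjoint p (mem_of_mem_erase hp) q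
      (mem_of_mem_erase hq)⟩
    have := hM.bounds q (mem_of_mem_erase hq)
    have := hE q hq
    omega
  have hi' : i ∈ Icc 1 (n + 1) := by
    have := hM.bounds _ hi
    simp only [mem_Icc] at *
    omega
  have hEM' : (E.image (Prod.map (Nat.predAbove i) (Nat.predAbove i))).image
      (Prod.map (Nat.succAbove i) (Nat.succAbove i)) = E := by
    rw [image_image, image_congr (g := id) fun q hq => ?_, image_id]
    exact Prod.ext (Nat.succAbove_predAbove (hE q hq).2.1) (Nat.succAbove_predAbove (hE q hq).2.2.1)
  have hEA : NoAlign E := fun p hp q hq => hA p (mem_of_mem_erase hp) q (mem_of_mem_erase hq)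
  have hinj := (Nat.succAbove_strictMono i).injective
  refine ⟨_, hEarc.image_predAbove hi' fun q hq => ⟨(hE q hq).2.1, (hE q hq).2.2.1⟩,
    hEA.image_predAbove fun q hq => (hE q hq).2, ?_, mem_sdiff.2 ⟨hi', ?_⟩, ?_⟩
  · rw [← card_image_of_injective _ (hinj.prodMap hinj), hEM', card_erase_add_one hi]
  · rw [mem_image]
    rintro ⟨_, hq', h⟩
    obtain ⟨q, hq, rfl⟩ := mem_image.1 hq'
    have := hE q hq
    simp only [Prod.map_snd, Nat.predAbove] at h
    split_ifs at h <;> omega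
  · rw [addTopArc, hEM', insert_erase hi]

lemma card_filter_exists_snd_eq_alignFreeArcSets (n k : ℕ) :
    #{M ∈ alignFreeArcSets (n + 2) (k + 1) | ∃ p ∈ M, p.2 = n + 2} =
      (n + 1 - k) * #(alignFreeArcSets n k) := by
  classical
  calc _ = #((alignFreeArcSets n k).sigma fun M => Icc 1 (n + 1) \ M.image (·.2 + 1)) := by
        refine (card_bij (fun a _ => addTopArc n a.2 a.1) ?_ ?_ ?_).symm
        · rintro ⟨M, i⟩ hMi
          obtain ⟨hM, hi⟩ := mem_sigma.1 hMi
          obtain ⟨hMarc, hMA, rfl⟩ := mem_alignFreeArcSets.1 hM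
          obtain ⟨hiIcc, hgap⟩ := mem_sdiff.1 hi
          refine mem_filter.2 ⟨mem_alignFreeArcSets.2 ⟨isArcSet_addTopArc hMarc hiIcc,
            noAlign_addTopArc hMarc hMA (mem_Icc.1 hiIcc).2 hgap, card_addTopArc hMarc i⟩,
            (i, n + 2), mem_insert_self _ _, rfl⟩
        · rintro ⟨M, i⟩ hMi ⟨M', i'⟩ hMi' h
          obtain ⟨rfl, rfl⟩ := addTopArc_inj (mem_alignFreeArcSets.1 (mem_sigma.1 hMi).1).1
            (mem_alignFreeArcSets.1 (mem_sigma.1 hMi').1).1 h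
          rfl
        · intro M hM
          obtain ⟨hM, ⟨p, hp, hpn⟩⟩ := mem_filter.1 hM
          obtain ⟨hMarc, hMA, hMk⟩ := mem_alignFreeArcSets.1 hM
          obtain ⟨M', hM'arc, hM'A, hcard, hi, rfl⟩ :=
            exists_addTopArc_eq hMarc hMA (show (p.1, n + 2) ∈ M from hpn ▸ hp)
          have hM'k : #M' = k := by omega
          exact ⟨⟨M', p.1⟩,
            mem_sigma.2 ⟨mem_alignFreeArcSets.2 ⟨hM'arc, hM'A, hM'k⟩, hi⟩, rfl⟩
    _ = ∑ M ∈ alignFreeArcSets n k, (n + 1 - k) := by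
        rw [card_sigma]
        refine sum_congr rfl fun M hM => ?_
        obtain ⟨hMarc, -, rfl⟩ := mem_alignFreeArcSets.1 hM
        exact card_sdiff_image_snd_add_one hMarc
    _ = _ := by rw [sum_const, smul_eq_mul, mul_comm]

lemma filter_not_exists_snd_eq_alignFreeArcSets (n k : ℕ) :
    {M ∈ alignFreeArcSets (n + 1) k | ¬∃ p ∈ M, p.2 = n + 1} = alignFreeArcSets n k := by
  ext M
  simp only [mem_filter, mem_alignFreeArcSets, not_exists, not_and]
  refine ⟨fun ⟨⟨hM, hMA, hMk⟩, htop⟩ => ⟨⟨fun p hp => ?_, hM.disjoint⟩, hMA, hMk⟩,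
    fun ⟨hM, hMA, hMk⟩ => ⟨⟨hM.mono n.le_succ, hMA, hMk⟩, fun p hp => ?_⟩⟩
  · have := hM.bounds p hp
    have := htop p hp
    omega
  · have := hM.bounds p hp
    omega

lemma card_alignFreeArcSets_succ_succ (n k : ℕ) :
    #(alignFreeArcSets (n + 2) (k + 1)) =
      #(alignFreeArcSets (n + 1) (k + 1)) + (n + 1 - k) * #(alignFreeArcSets n k) := by
  have htop := card_filter_exists_snd_eq_alignFreeArcSets n k
  have hnot : {M ∈ alignFreeArcSets (n + 2) (k + 1) | ¬∃ p ∈ M, p.2 = n + 2} =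
      alignFreeArcSets (n + 1) (k + 1) :=
    filter_not_exists_snd_eq_alignFreeArcSets (n + 1) (k + 1)
  rw [← card_filter_add_card_filter_not (fun M => ∃ p ∈ M, p.2 = n + 2), htop, hnot, add_comm]

theorem card_alignFreeArcSets (n k : ℕ) : #(alignFreeArcSets n k) = esymmIcc (n - k) k := by
  induction n using Nat.strong_induction_on generalizing k with
  | _ n ih =>
  match n, k with
  | _, 0 => rw [alignFreeArcSets_zero_right, card_singleton, esymmIcc_zero_right]
  | 0, k + 1 | 1, k + 1 =>
    rw [alignFreeArcSets_succ_of_le_one (by omega), card_empty, show _ - (k + 1) = 0 by omega,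
      esymmIcc_zero_succ]
  | n + 2, k + 1 =>
    rw [card_alignFreeArcSets_succ_succ, ih (n + 1) (by omega), ih n (by omega),
      esymmIcc_sub_succ_succ]

end ArcSets

section Matchings

variable {n : ℕ} {M : Finset (ℕ × ℕ)} {P Q : Finpartition (Icc 1 n)}

lemma mem_part_of_isArc {p : ℕ × ℕ} {x : ℕ} (hp : IsArc P p) (hx : x = p.1 ∨ x = p.2) :
    p.1 ∈ P.part x ∧ p.2 ∈ P.part x := by
  obtain ⟨-, B, hB, h1, h2, -⟩ := hp
  rw [P.part_eq_of_mem hB (by rcases hx with rfl | rfl <;> assumption)]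
  exact ⟨h1, h2⟩

lemma isArc_iff_of_isMatching (hP : IsMatching P) {a b : ℕ} :
    IsArc P (a, b) ↔ a < b ∧ b ∈ P.part a := by
  rw [Finpartition.mem_part_iff_exists]
  refine ⟨fun ⟨hab, B, hB, ha, hb, _⟩ => ⟨hab, B, hB, hb, ha⟩,
    fun ⟨hab, B, hB, hb, ha⟩ => ⟨hab, B, hB, ha, hb, fun c hc hacb => ?_⟩⟩
  have := eq_or_eq_or_eq_of_card_le_two (hP B hB) ha hb hc
  simp only at hacb
  omega

open Classical in
noncomputable def arcs (P : Finpartition (Icc 1 n)) : Finset (ℕ × ℕ) :=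
  (Icc 1 n ×ˢ Icc 1 n).filter (IsArc P)

lemma mem_arcs {p : ℕ × ℕ} : p ∈ arcs P ↔ IsArc P p := by
  classical
  refine ⟨fun h => (mem_filter.1 h).2, fun h => mem_filter.2 ⟨?_, h⟩⟩
  obtain ⟨-, B, hB, h1, h2, -⟩ := h
  exact mem_product.2 ⟨P.le hB h1, P.le hB h2⟩

lemma numArcs_eq_card_arcs (P : Finpartition (Icc 1 n)) : numArcs P = #(arcs P) := by
  rw [numArcs, ← Set.ncard_coe_finset]
  congr
  ext p
  exact mem_arcs.symm

lemma noAlign_arcs_iff : NoAlign (arcs P) ↔ ¬HasNbrAlign P := by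
  simp only [NoAlign, HasNbrAlign, mem_arcs, ne_eq, not_exists, not_and]
  exact ⟨fun h p q hp hq => h p hp q hq, fun h p hp q hq => h p q hp hq⟩

lemma mem_part_iff_mem_arcs (hP : IsMatching P) {a b : ℕ} (hab : a < b) :
    b ∈ P.part a ↔ (a, b) ∈ arcs P := by
  rw [mem_arcs, isArc_iff_of_isMatching hP, and_iff_right hab]

lemma IsMatching.isArcSet_arcs (hP : IsMatching P) : IsArcSet n (arcs P) := by
  classical
  refine ⟨fun p hp => ?_, fun p hp q hq hpq => ?_⟩
  · have h1 := mem_product.1 (mem_filter.1 hp).1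
    have h2 := (mem_arcs.1 hp).1
    simp only [mem_Icc] at h1
    omega
  have hp := mem_arcs.1 hp
  have hq := mem_arcs.1 hq
  have key (x : ℕ) (hxp : x = p.1 ∨ x = p.2) (hxq : x = q.1 ∨ x = q.2) : False := by
    obtain ⟨hp1, hp2⟩ := mem_part_of_isArc hp hxp
    obtain ⟨hq1, hq2⟩ := mem_part_of_isArc hq hxq
    have hcard := hP _ (P.part_mem.2 (P.part_nonempty.1 ⟨_, hp1⟩))
    have := eq_or_eq_or_eq_of_card_le_two hcard hp1 hp2 hq1
    have := eq_or_eq_or_eq_of_card_le_two hcard hp1 hp2 hq2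
    have := hp.1
    have := hq.1
    exact hpq (Prod.ext (by omega) (by omega))
  exact ⟨fun h => key _ (.inl rfl) (.inl h), fun h => key _ (.inl rfl) (.inr h),
    fun h => key _ (.inr rfl) (.inl h), fun h => key _ (.inr rfl) (.inr h)⟩

lemma IsMatching.eq_of_arcs_eq (hP : IsMatching P) (hQ : IsMatching Q) (h : arcs P = arcs Q) :
    P = Q := by
  have key {a b : ℕ} (hab : a < b) : b ∈ P.part a ↔ b ∈ Q.part a := by
    rw [mem_part_iff_mem_arcs hP hab, mem_part_iff_mem_arcs hQ hab, h]
  refine Finpartition.ext_of_mem_part fun a b => ?_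
  rcases lt_trichotomy a b with hab | rfl | hba
  · exact key hab
  · simp
  · rw [P.mem_part_comm, Q.mem_part_comm]
    exact key hba

def arcSetoid (M : Finset (ℕ × ℕ)) (hM : EndpointsDisjoint M) : Setoid ℕ where
  r a b := a = b ∨ (a, b) ∈ M ∨ (b, a) ∈ M
  iseqv := by
    refine ⟨fun _ => .inl rfl, fun h => h.imp Eq.symm Or.symm, ?_⟩
    rintro a b c (rfl | hab) (rfl | hbc)
    · exact .inl rfl
    · exact .inr hbc
    · exact .inr hab
    · exact .inl (hM.eq_of_mem_arc (x := b) hab.symm hbc)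

open Classical in
noncomputable def matchingOfArcs (n : ℕ) (hM : EndpointsDisjoint M) : Finpartition (Icc 1 n) :=
  .ofSetSetoid (arcSetoid M hM) (Icc 1 n)

open Classical in
lemma mem_part_matchingOfArcs (hM : EndpointsDisjoint M) {a b : ℕ} :
    b ∈ (matchingOfArcs n hM).part a ↔
      a ∈ Icc 1 n ∧ b ∈ Icc 1 n ∧ (a = b ∨ (a, b) ∈ M ∨ (b, a) ∈ M) :=
  Finpartition.mem_part_ofSetSetoid_iff_rel _

lemma isMatching_matchingOfArcs (hM : EndpointsDisjoint M) :
    IsMatching (matchingOfArcs n hM) := by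
  intro B hB
  obtain ⟨x, hx⟩ := (matchingOfArcs n hM).nonempty_of_mem_parts hB
  rw [← (matchingOfArcs n hM).part_eq_of_mem hB hx]
  by_contra! h
  obtain ⟨a, ha, b, hb, c, hc, hab, hac, hbc⟩ := two_lt_card.1 h
  rw [mem_part_matchingOfArcs] at ha hb hc
  rcases ha.2.2 with rfl | ha <;> rcases hb.2.2 with rfl | hb <;> rcases hc.2.2 with rfl | hc
  all_goals first
    | exact hab rfl | exact hac rfl | exact hbc rfl
    | exact hab (hM.eq_of_mem_arc ha hb) | exact hac (hM.eq_of_mem_arc ha hc)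
    | exact hbc (hM.eq_of_mem_arc hb hc)

lemma arcs_matchingOfArcs (hM : IsArcSet n M) : arcs (matchingOfArcs n hM.disjoint) = M := by
  ext ⟨a, b⟩
  rw [mem_arcs, isArc_iff_of_isMatching (isMatching_matchingOfArcs _), mem_part_matchingOfArcs,
    mem_Icc, mem_Icc]
  constructor
  · rintro ⟨hab, -, -, rfl | h | h⟩
    · omega
    · exact h
    · have := hM.bounds _ h
      simp only at this
      omega
  · intro h
    have := hM.bounds _ h
    simp only at this
    exact ⟨by omega, by omega, by omega, .inr (.inl h)⟩

theorem Pnum_eq_card_alignFreeArcSets (n k : ℕ) : Pnum n k = #(alignFreeArcSets n k) := by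
  have hinj : Set.InjOn arcs
      {P : Finpartition (Icc 1 n) | IsMatching P ∧ numArcs P = k ∧ ¬HasNbrAlign P} :=
    fun P hP Q hQ h => hP.1.eq_of_arcs_eq hQ.1 h
  have himg : arcs '' {P : Finpartition (Icc 1 n) | IsMatching P ∧ numArcs P = k ∧
      ¬HasNbrAlign P} = alignFreeArcSets n k := by
    ext M
    simp only [Set.mem_image, Set.mem_ofPred_eq, mem_coe, mem_alignFreeArcSets]
    constructor
    · rintro ⟨P, ⟨hP, rfl, hPA⟩, rfl⟩
      exact ⟨hP.isArcSet_arcs, noAlign_arcs_iff.2 hPA, (numArcs_eq_card_arcs P).symm⟩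
    · rintro ⟨hM, hMA, rfl⟩
      refine ⟨matchingOfArcs n hM.disjoint, ⟨isMatching_matchingOfArcs _, ?_, ?_⟩,
        arcs_matchingOfArcs hM⟩
      · rw [numArcs_eq_card_arcs, arcs_matchingOfArcs hM]
      · rw [← noAlign_arcs_iff, arcs_matchingOfArcs hM]
        exact hMA
  rw [Pnum, ← hinj.ncard_image, himg, Set.ncard_coe_finset]

end Matchings

theorem stmt_1_general (n k : ℕ) :
    Pnum n k = ∑ S ∈ (Finset.Icc 1 (n - k)).powersetCard k, ∏ x ∈ S, x := by
  rw [Pnum_eq_card_alignFreeArcSets, card_alignFreeArcSets]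
  rfl

/-- `P(n,k)` equals the elementary symmetric polynomial `e_k(1, 2, ..., n-k)`. -/
theorem stmt_1 (n k : ℕ) (hn : 1 ≤ n) (hk : k ≤ n / 2) :
    Pnum n k = ∑ S ∈ (Finset.Icc 1 (n - k)).powersetCard k, ∏ x ∈ S, x :=
  stmt_1_general n k
end

section
/- For all integers n and k with 1 ≤ k ≤ (n-1)/2, the number of partial matchings of [n-1] with exactly k arcs that avoid both neighbor alignments and left nestings equals the Stirling number of the second kind S(n-k, n-2k), i.e. Q(n-1,k) = S(n-k, n-2k). -/
open Finset

/-!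
A set partition of `[m]` is determined by the edges from the minimum of each block to its other
elements, and a partial matching by its arcs. Given the edges `E` of a partition of `[m]` into
`m - k` blocks, list the pairs `(x, 0)` for `x ∈ [m]` and the edges of `E` lexicographically and
number them from `0`. Joining the positions of each edge `(x, y)` and of `(y, 0)` gives a partial
matching of `[m + k - 1]` with `k` arcs and no neighbor alignments or left nestings: the openers
issued by a vertex `x` are consecutive, directly after the letter `(x, 0)`, and their closers
increase. Conversely, merging every opener of such a matching into the position before it
recovers the vertices `1, …, m`, and the absence of left nestings recovers the order of the
closers.
-/

theorem Finset.card_filter_lt_lt_card_filter_lt {α : Type*} [Preorder α] [DecidableLT α]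
    {s : Finset α} {a b : α} (ha : a ∈ s) (hab : a < b) :
    #{x ∈ s | x < a} < #{x ∈ s | x < b} := by
  refine Finset.card_lt_card (Finset.ssubset_iff_of_subset ?_ |>.2 ⟨a, ?_, ?_⟩)
  · intro x
    simp only [mem_filter]
    exact fun h => ⟨h.1, h.2.trans hab⟩
  · simp [ha, hab]
  · simp

theorem Finpartition.ext_part {α : Type*} [DecidableEq α] {s : Finset α} {P Q : Finpartition s}
    (h : ∀ a ∈ s, P.part a = Q.part a) : P = Q := by
  suffices key : ∀ P Q : Finpartition s, (∀ a ∈ s, P.part a = Q.part a) → P.parts ⊆ Q.parts from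
    Finpartition.ext (subset_antisymm (key P Q h) (key Q P fun a ha => (h a ha).symm))
  intro P Q h B hB
  obtain ⟨x, hx⟩ := P.nonempty_of_mem_parts hB
  have hxs : x ∈ s := P.le hB hx
  rw [← P.part_eq_of_mem hB hx, h x hxs]
  exact Q.part_mem.2 hxs

theorem Finpartition.part_eq_part_of_mem {α : Type*} [DecidableEq α] {s : Finset α}
    (P : Finpartition s) {x y : α} (h : y ∈ P.part x) : P.part y = P.part x :=
  P.part_eq_of_mem (P.part_mem.2 (P.part_nonempty.1 ⟨y, h⟩)) h

theorem Finpartition.exists_least_mem_part {α : Type*} [LinearOrder α] {s : Finset α}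
    (P : Finpartition s) {x : α} (hx : x ∈ s) : ∃ r ∈ P.part x, ∀ y ∈ P.part x, r ≤ y :=
  ⟨_, min'_mem _ (P.part_nonempty.2 hx), fun y hy => min'_le _ y hy⟩

theorem Set.ncard_setOf_comp_eq {α β : Type*} {f : α → β} {g : β → α} {S : Set β}
    (hf : ∀ a, f a ∈ S) (hgf : Function.LeftInverse g f) (hfg : ∀ b ∈ S, f (g b) = b)
    (p : β → Prop) : {a | p (f a)}.ncard = {b | b ∈ S ∧ p b}.ncard := by
  rw [← hgf.injective.injOn.ncard_image]
  congr 1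
  ext b
  constructor
  · rintro ⟨a, ha, rfl⟩
    exact ⟨hf a, ha⟩
  · rintro ⟨hb, hpb⟩
    exact ⟨g b, show p (f (g b)) by rwa [hfg b hb], hfg b hb⟩

theorem Finset.card_filter_image_of_injOn {α β : Type*} [DecidableEq β] {s : Finset α}
    {f : α → β} (hf : Set.InjOn f s) (p : β → Prop) [DecidablePred p] :
    #{b ∈ s.image f | p b} = #{a ∈ s | p (f a)} := by
  rw [filter_image, card_image_of_injOn (hf.mono fun _ hx => (mem_filter.1 hx).1)]

structure IsStar (s : Finset ℕ) (E : Finset (ℕ × ℕ)) : Prop where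
  fst_mem : ∀ a ∈ E, a.1 ∈ s
  snd_mem : ∀ a ∈ E, a.2 ∈ s
  fst_lt_snd : ∀ a ∈ E, a.1 < a.2
  snd_inj : ∀ a ∈ E, ∀ b ∈ E, a.2 = b.2 → a = b
  fst_ne_snd : ∀ a ∈ E, ∀ b ∈ E, a.1 ≠ b.2

noncomputable def root (E : Finset (ℕ × ℕ)) (x : ℕ) : ℕ :=
  if h : ∃ a ∈ E, a.2 = x then h.choose.1 else x

section Root

variable {s : Finset ℕ} {E : Finset (ℕ × ℕ)}

theorem root_of_forall_ne {x : ℕ} (h : ∀ a ∈ E, a.2 ≠ x) : root E x = x := by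
  rw [root, dif_neg]
  exact fun ⟨a, ha, hax⟩ => h a ha hax

theorem IsStar.root_snd (hE : IsStar s E) {a : ℕ × ℕ} (ha : a ∈ E) : root E a.2 = a.1 := by
  have h : ∃ b ∈ E, b.2 = a.2 := ⟨a, ha, rfl⟩
  rw [root, dif_pos h, hE.snd_inj _ h.choose_spec.1 a ha h.choose_spec.2]

theorem IsStar.root_fst (hE : IsStar s E) {a : ℕ × ℕ} (ha : a ∈ E) : root E a.1 = a.1 :=
  root_of_forall_ne fun b hb => (hE.fst_ne_snd a ha b hb).symm

theorem IsStar.exists_of_root_ne (hE : IsStar s E) {x : ℕ} (hx : root E x ≠ x) :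
    ∃ a ∈ E, a = (root E x, x) := by
  by_cases h : ∃ a ∈ E, a.2 = x
  · obtain ⟨a, ha, rfl⟩ := h
    exact ⟨a, ha, by rw [hE.root_snd ha]⟩
  · exact absurd (root_of_forall_ne fun a ha hax => h ⟨a, ha, hax⟩) hx

theorem IsStar.root_le (hE : IsStar s E) (x : ℕ) : root E x ≤ x := by
  by_cases hx : root E x = x
  · exact hx.le
  · obtain ⟨a, ha, hax⟩ := hE.exists_of_root_ne hx
    rw [Prod.ext_iff] at hax
    simpa [hax.1, hax.2] using (hE.fst_lt_snd a ha).le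

theorem IsStar.root_mem (hE : IsStar s E) {x : ℕ} (hx : x ∈ s) : root E x ∈ s := by
  by_cases h : root E x = x
  · rwa [h]
  · obtain ⟨a, ha, rfl⟩ := hE.exists_of_root_ne h
    exact hE.fst_mem _ ha

theorem IsStar.root_root (hE : IsStar s E) (x : ℕ) : root E (root E x) = root E x := by
  by_cases h : root E x = x
  · rw [h, h]
  · obtain ⟨a, ha, hax⟩ := hE.exists_of_root_ne h
    rw [show root E x = a.1 by rw [hax]]
    exact hE.root_fst ha

end Root

open Classical in
noncomputable def ofStar (s : Finset ℕ) (E : Finset (ℕ × ℕ)) : Finpartition s :=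
  Finpartition.ofSetSetoid (Setoid.ker (root E)) s

theorem mem_part_ofStar {s : Finset ℕ} {E : Finset (ℕ × ℕ)} {x y : ℕ} :
    y ∈ (ofStar s E).part x ↔ x ∈ s ∧ y ∈ s ∧ root E x = root E y := by
  rw [ofStar, Finpartition.mem_part_ofSetSetoid_iff_rel, Setoid.ker_def]

noncomputable def starEdges {s : Finset ℕ} (P : Finpartition s) : Finset (ℕ × ℕ) :=
  {a ∈ s ×ˢ s | a.1 < a.2 ∧ a.2 ∈ P.part a.1 ∧ ∀ y ∈ P.part a.1, a.1 ≤ y}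

section StarEdges

variable {s : Finset ℕ} (P : Finpartition s)

theorem mem_starEdges {a : ℕ × ℕ} :
    a ∈ starEdges P ↔ a.1 < a.2 ∧ a.2 ∈ P.part a.1 ∧ ∀ y ∈ P.part a.1, a.1 ≤ y := by
  rw [starEdges, mem_filter, mem_product, and_iff_right_iff_imp]
  rintro ⟨-, h, -⟩
  have h1 : a.1 ∈ s := P.part_nonempty.1 ⟨_, h⟩
  exact ⟨h1, P.part_subset _ h⟩

theorem isStar_starEdges : IsStar s (starEdges P) where
  fst_mem a ha := P.part_nonempty.1 ⟨_, ((mem_starEdges P).1 ha).2.1⟩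
  snd_mem a ha := P.part_subset _ ((mem_starEdges P).1 ha).2.1
  fst_lt_snd a ha := ((mem_starEdges P).1 ha).1
  snd_inj a ha b hb hab := by
    obtain ⟨-, ha2, ha3⟩ := (mem_starEdges P).1 ha
    obtain ⟨-, hb2, hb3⟩ := (mem_starEdges P).1 hb
    have hpart : P.part a.1 = P.part b.1 := by
      rw [← P.part_eq_part_of_mem ha2, ← P.part_eq_part_of_mem hb2, hab]
    have h1 := ha3 b.1 (hpart ▸ P.mem_part (P.part_nonempty.1 ⟨_, hb2⟩))
    have h2 := hb3 a.1 (hpart ▸ P.mem_part (P.part_nonempty.1 ⟨_, ha2⟩))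
    exact Prod.ext (le_antisymm h1 h2) hab
  fst_ne_snd a ha b hb hab := by
    obtain ⟨-, -, ha3⟩ := (mem_starEdges P).1 ha
    obtain ⟨hb1, hb2, -⟩ := (mem_starEdges P).1 hb
    have : b.1 ∈ P.part a.1 := by
      rw [hab, P.part_eq_part_of_mem hb2]
      exact P.mem_part (P.part_nonempty.1 ⟨_, hb2⟩)
    exact absurd (ha3 _ this) (by omega)

theorem root_starEdges {x r : ℕ} (hr : r ∈ P.part x) (hleast : ∀ y ∈ P.part x, r ≤ y) :
    root (starEdges P) x = r := by
  have hx : x ∈ s := P.part_nonempty.1 ⟨r, hr⟩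
  have hpart : P.part r = P.part x := P.part_eq_part_of_mem hr
  rcases (hleast x (P.mem_part hx)).lt_or_eq with hlt | rfl
  · exact (isStar_starEdges P).root_snd (a := (r, x))
      ((mem_starEdges P).2 ⟨hlt, hpart ▸ P.mem_part hx, hpart ▸ hleast⟩)
  · refine root_of_forall_ne fun a ha hax => ?_
    obtain ⟨ha1, ha2, -⟩ := (mem_starEdges P).1 ha
    rw [hax] at ha2
    have := hleast a.1 (P.part_eq_part_of_mem ha2 ▸ P.mem_part (P.part_nonempty.1 ⟨_, ha2⟩))
    omega

theorem root_starEdges_mem_part {x : ℕ} (hx : x ∈ s) : root (starEdges P) x ∈ P.part x := by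
  obtain ⟨r, hr, hleast⟩ := P.exists_least_mem_part hx
  rwa [root_starEdges P hr hleast]

theorem root_starEdges_eq_iff {x y : ℕ} (hx : x ∈ s) (hy : y ∈ s) :
    root (starEdges P) x = root (starEdges P) y ↔ P.part x = P.part y := by
  constructor
  · intro h
    have hxy := root_starEdges_mem_part P hy
    rw [← h] at hxy
    rw [← P.part_eq_part_of_mem (root_starEdges_mem_part P hx), P.part_eq_part_of_mem hxy]
  · intro h
    obtain ⟨r, hr, hleast⟩ := P.exists_least_mem_part hx
    rw [root_starEdges P hr hleast, root_starEdges P (h ▸ hr) (h ▸ hleast)]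

theorem ofStar_starEdges : ofStar s (starEdges P) = P := by
  refine Finpartition.ext_part fun x hx => Finset.ext fun y => ?_
  rw [mem_part_ofStar]
  constructor
  · rintro ⟨-, hy, h⟩
    rw [(root_starEdges_eq_iff P hx hy).1 h]
    exact P.mem_part hy
  · intro hy
    have hys : y ∈ s := P.part_subset x hy
    exact ⟨hx, hys, (root_starEdges_eq_iff P hx hys).2 (P.part_eq_part_of_mem hy).symm⟩

theorem card_parts_eq_card_filter_root_eq :
    #P.parts = #{x ∈ s | root (starEdges P) x = x} := by
  symm
  refine Finset.card_bij (fun x _ => P.part x) (fun x hx => P.part_mem.2 (mem_filter.1 hx).1)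
    (fun x hx y hy hxy => ?_) (fun B hB => ?_)
  · obtain ⟨hx, hrx⟩ := mem_filter.1 hx
    obtain ⟨hy, hry⟩ := mem_filter.1 hy
    rw [← hrx, ← hry]
    exact (root_starEdges_eq_iff P hx hy).2 hxy
  · obtain ⟨x, hx⟩ := P.nonempty_of_mem_parts hB
    have hxs : x ∈ s := P.le hB hx
    have hr := root_starEdges_mem_part P hxs
    refine ⟨root (starEdges P) x, mem_filter.2 ⟨P.part_subset x hr,
      (isStar_starEdges P).root_root x⟩, ?_⟩
    rw [P.part_eq_part_of_mem hr, P.part_eq_of_mem hB hx]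

end StarEdges

theorem IsStar.card_eq {s : Finset ℕ} {E : Finset (ℕ × ℕ)} (hE : IsStar s E) :
    #E = #{x ∈ s | root E x ≠ x} := by
  symm
  refine Finset.card_bij (fun x _ => (root E x, x)) (fun x hx => ?_)
    (fun x _ y _ h => congrArg Prod.snd h) (fun a ha => ⟨a.2, ?_, ?_⟩)
  · obtain ⟨a, ha, hax⟩ := hE.exists_of_root_ne (mem_filter.1 hx).2
    exact hax ▸ ha
  · rw [mem_filter, hE.root_snd ha]
    exact ⟨hE.snd_mem a ha, (hE.fst_lt_snd a ha).ne⟩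
  · rw [hE.root_snd ha]

theorem card_starEdges_add_card_parts {s : Finset ℕ} (P : Finpartition s) :
    #(starEdges P) + #P.parts = #s := by
  rw [(isStar_starEdges P).card_eq, card_parts_eq_card_filter_root_eq, add_comm,
    Finset.card_filter_add_card_filter_not]

theorem starEdges_ofStar {s : Finset ℕ} {E : Finset (ℕ × ℕ)} (hE : IsStar s E) :
    starEdges (ofStar s E) = E := by
  ext a
  simp only [mem_starEdges, mem_part_ofStar]
  constructor
  · rintro ⟨hlt, ⟨h1, h2, hroot⟩, hleast⟩
    have hfix : root E a.1 = a.1 :=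
      le_antisymm (hE.root_le _) (hleast _ ⟨h1, hE.root_mem h1, (hE.root_root _).symm⟩)
    obtain ⟨b, hb, hba⟩ := hE.exists_of_root_ne (x := a.2) (by omega)
    rw [← hroot, hfix, Prod.mk.eta] at hba
    exact hba ▸ hb
  · intro ha
    have hfix := hE.root_fst ha
    refine ⟨hE.fst_lt_snd a ha, ⟨hE.fst_mem a ha, hE.snd_mem a ha, ?_⟩, ?_⟩
    · rw [hfix, hE.root_snd ha]
    · rintro y ⟨-, -, hy⟩
      rw [← hfix, hy]
      exact hE.root_le y

theorem stirling_eq_ncard_isStar {m b k : ℕ} (h : b + k = m) :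
    Stirling m b = {E | IsStar (Icc 1 m) E ∧ #E = k}.ncard := by
  have hparts : ∀ P : Finpartition (Icc 1 m), #P.parts = b ↔ #(starEdges P) = k := by
    intro P
    have := card_starEdges_add_card_parts P
    rw [Nat.card_Icc] at this
    omega
  simp_rw [Stirling, hparts]
  exact Set.ncard_setOf_comp_eq (S := {E | IsStar (Icc 1 m) E}) isStar_starEdges
    ofStar_starEdges (fun _ => starEdges_ofStar) (#· = k)

/-- Arc sets of the partial matchings counted by `Qnum`. -/
structure IsQArcs (N : ℕ) (A : Finset (ℕ × ℕ)) : Prop extends IsStar (Icc 1 N) A where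
  fst_inj : ∀ a ∈ A, ∀ b ∈ A, a.1 = b.1 → a = b
  snd_add_one_ne_fst : ∀ a ∈ A, ∀ b ∈ A, a.2 + 1 ≠ b.1
  snd_lt_snd_of_fst_add_one : ∀ a ∈ A, ∀ b ∈ A, a.1 + 1 = b.1 → a.2 < b.2

section Matching

variable {N : ℕ} {P : Finpartition (Icc 1 N)}

theorem IsMatching.eq_or_eq (hP : IsMatching P) {B : Finset ℕ} (hB : B ∈ P.parts)
    {x y z : ℕ} (hx : x ∈ B) (hy : y ∈ B) (hz : z ∈ B) (hxy : x ≠ y) : z = x ∨ z = y := by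
  by_contra! h
  have : 2 < #B := Finset.two_lt_card_iff.2 ⟨x, y, z, hx, hy, hz, hxy, h.1.symm, h.2.symm⟩
  exact absurd (hP B hB) (by omega)

theorem IsMatching.isArc_iff (hP : IsMatching P) {a : ℕ × ℕ} :
    IsArc P a ↔ a ∈ starEdges P := by
  rw [mem_starEdges]
  constructor
  · rintro ⟨hlt, B, hB, h1, h2, -⟩
    rw [P.part_eq_of_mem hB h1]
    refine ⟨hlt, h2, fun y hy => ?_⟩
    rcases hP.eq_or_eq hB h1 h2 hy hlt.ne with rfl | rfl <;> omega
  · rintro ⟨hlt, h2, -⟩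
    have h1 := P.mem_part (P.part_nonempty.1 ⟨_, h2⟩)
    refine ⟨hlt, _, P.part_mem.2 (P.part_nonempty.1 ⟨_, h2⟩), h1, h2, fun c hc => ?_⟩
    rcases hP.eq_or_eq (P.part_mem.2 (P.part_nonempty.1 ⟨_, h2⟩)) h1 h2 hc hlt.ne with rfl | rfl
      <;> omega

theorem isMatching_iff_fst_inj :
    IsMatching P ↔ ∀ a ∈ starEdges P, ∀ b ∈ starEdges P, a.1 = b.1 → a = b := by
  constructor
  · intro hP a ha b hb hab
    obtain ⟨ha1, ha2, -⟩ := (mem_starEdges P).1 ha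
    obtain ⟨hb1, hb2, -⟩ := (mem_starEdges P).1 hb
    have hB := P.part_mem.2 (P.part_nonempty.1 ⟨_, ha2⟩)
    have hfst := P.mem_part (P.part_nonempty.1 ⟨_, ha2⟩)
    rw [hab] at ha1 ha2 hfst hB
    rcases hP.eq_or_eq hB hfst ha2 hb2 ha1.ne with h | h
    · omega
    · exact (isStar_starEdges P).snd_inj a ha b hb h.symm
  · intro hinj B hB
    by_contra! hcard
    obtain ⟨x, hx⟩ := P.nonempty_of_mem_parts hB
    obtain ⟨r, hr, hleast⟩ := P.exists_least_mem_part (P.le hB hx)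
    rw [P.part_eq_of_mem hB hx] at hr hleast
    have hedge : ∀ u ∈ B.erase r, (r, u) ∈ starEdges P := by
      intro u hu
      obtain ⟨hur, hu⟩ := mem_erase.1 hu
      rw [mem_starEdges, P.part_eq_of_mem hB hr]
      exact ⟨lt_of_le_of_ne (hleast u hu) (Ne.symm hur), hu, hleast⟩
    obtain ⟨u, hu, v, hv, huv⟩ := Finset.one_lt_card.1 (by rw [card_erase_of_mem hr]; omega)
    exact huv (congrArg Prod.snd (hinj _ (hedge u hu) _ (hedge v hv) rfl))

theorem matching_iff_isQArcs {k : ℕ} :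
    (IsMatching P ∧ numArcs P = k ∧ ¬ HasNbrAlign P ∧ ¬ HasLeftNesting P) ↔
      IsQArcs N (starEdges P) ∧ #(starEdges P) = k := by
  have hstar := isStar_starEdges P
  constructor
  · rintro ⟨hP, rfl, hNA, hLN⟩
    have harc : ∀ a, IsArc P a ↔ a ∈ starEdges P := fun a => hP.isArc_iff
    refine ⟨⟨hstar, isMatching_iff_fst_inj.1 hP, ?_, ?_⟩, ?_⟩
    · intro a ha b hb hab
      exact hNA ⟨a, b, (harc a).2 ha, (harc b).2 hb, hab⟩
    · intro a ha b hb hab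
      have hne : a.2 ≠ b.2 := fun h => by
        rw [hstar.snd_inj a ha b hb h] at hab
        omega
      have : ¬ b.2 < a.2 := fun h => hLN ⟨a, b, (harc a).2 ha, (harc b).2 hb, hab, h⟩
      omega
    · rw [numArcs, ← Set.ncard_coe_finset]
      exact congrArg Set.ncard (Set.ext harc).symm
  · rintro ⟨hA, rfl⟩
    have hP := isMatching_iff_fst_inj.2 hA.fst_inj
    have harc : ∀ a, IsArc P a ↔ a ∈ starEdges P := fun a => hP.isArc_iff
    refine ⟨hP, ?_, ?_, ?_⟩
    · rw [numArcs, ← Set.ncard_coe_finset]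
      exact congrArg Set.ncard (Set.ext harc)
    · rintro ⟨a, b, ha, hb, hab⟩
      exact hA.snd_add_one_ne_fst a ((harc a).1 ha) b ((harc b).1 hb) hab
    · rintro ⟨a, b, ha, hb, hab, hlt⟩
      have := hA.snd_lt_snd_of_fst_add_one a ((harc a).1 ha) b ((harc b).1 hb) hab
      omega

end Matching

theorem qnum_eq_ncard_isQArcs (N k : ℕ) :
    Qnum N k = {A | IsQArcs N A ∧ #A = k}.ncard := by
  simp_rw [Qnum, matching_iff_isQArcs]
  rw [Set.ncard_setOf_comp_eq (S := {E | IsStar (Icc 1 N) E}) isStar_starEdges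
    ofStar_starEdges (fun _ => starEdges_ofStar) (fun A => IsQArcs N A ∧ #A = k)]
  congr 1
  ext A
  exact ⟨fun h => h.2, fun h => ⟨h.1.toIsStar, h⟩⟩

theorem card_filter_toLex_le {E : Finset (ℕ × ℕ)} {a : ℕ × ℕ} (ha : a ∈ E) :
    #{e ∈ E | toLex e ≤ toLex a} = #{e ∈ E | toLex e < toLex a} + 1 := by
  rw [← card_insert_of_notMem (s := {e ∈ E | toLex e < toLex a}) (a := a) (by simp)]
  congr 1
  ext e
  simp only [mem_filter, mem_insert, le_iff_lt_or_eq, toLex_inj]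
  constructor
  · rintro ⟨he, h | rfl⟩
    exacts [Or.inr ⟨he, h⟩, Or.inl rfl]
  · rintro (rfl | ⟨he, h⟩)
    exacts [⟨ha, Or.inr rfl⟩, ⟨he, Or.inl h⟩]

def letters (m : ℕ) (E : Finset (ℕ × ℕ)) : Finset (ℕ ×ₗ ℕ) :=
  (Icc 1 m).image (fun x => toLex (x, 0)) ∪ E.image toLex

def pos (m : ℕ) (E : Finset (ℕ × ℕ)) (t : ℕ ×ₗ ℕ) : ℕ :=
  #{u ∈ letters m E | u < t}

def expand (m : ℕ) (E : Finset (ℕ × ℕ)) : Finset (ℕ × ℕ) :=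
  E.image fun a => (pos m E (toLex a), pos m E (toLex (a.2, 0)))

section Expand

variable {m : ℕ} {E : Finset (ℕ × ℕ)}

theorem toLex_vertex_mem_letters {x : ℕ} (hx : x ∈ Icc 1 m) : toLex (x, 0) ∈ letters m E :=
  mem_union_left _ (mem_image_of_mem _ hx)

theorem toLex_mem_letters {a : ℕ × ℕ} (ha : a ∈ E) : toLex a ∈ letters m E :=
  mem_union_right _ (mem_image_of_mem _ ha)

theorem pos_lt_pos {t u : ℕ ×ₗ ℕ} (ht : t ∈ letters m E) (htu : t < u) : pos m E t < pos m E u :=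
  card_filter_lt_lt_card_filter_lt ht htu

theorem strictMonoOn_pos : StrictMonoOn (pos m E) (letters m E) :=
  fun _ ht _ _ htu => pos_lt_pos ht htu

theorem pos_toLex_inj {a b : ℕ × ℕ} (ha : a ∈ E) (hb : b ∈ E)
    (h : pos m E (toLex a) = pos m E (toLex b)) : a = b :=
  toLex.injective (strictMonoOn_pos.injOn (toLex_mem_letters ha) (toLex_mem_letters hb) h)

theorem card_expand : #(expand m E) = #E :=
  card_image_of_injOn fun _ ha _ hb h => pos_toLex_inj ha hb (congrArg Prod.fst h)

theorem pos_lt_card_add {t : ℕ ×ₗ ℕ} (ht : t ∈ letters m E) : pos m E t < m + #E := by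
  rw [pos]
  refine (card_lt_card (filter_ssubset.2 ⟨t, ht, lt_irrefl t⟩ :
    {u ∈ letters m E | u < t} ⊂ letters m E)).trans_le ?_
  refine (card_union_le _ _).trans (add_le_add (card_image_le.trans ?_) card_image_le)
  rw [Nat.card_Icc, Nat.add_sub_cancel]

theorem pos_eq (hE : ∀ a ∈ E, 0 < a.2) (t : ℕ ×ₗ ℕ) :
    pos m E t = #{x ∈ Icc 1 m | toLex (x, 0) < t} + #{a ∈ E | toLex a < t} := by
  have hdisj : Disjoint ((Icc 1 m).image (fun x => toLex (x, 0))) (E.image toLex) := by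
    simp only [disjoint_left, mem_image, not_exists, not_and]
    rintro _ ⟨x, -, rfl⟩ a ha h
    exact (hE a ha).ne' (congrArg Prod.snd (toLex.injective h))
  rw [pos, letters, filter_union, card_union_of_disjoint (disjoint_filter_filter hdisj),
    card_filter_image_of_injOn (fun x _ y _ h => by simpa using h),
    card_filter_image_of_injOn toLex.injective.injOn]

theorem pos_vertex (hE : ∀ a ∈ E, 0 < a.2) {x : ℕ} (hx : x ≤ m + 1) :
    pos m E (toLex (x, 0)) = x - 1 + #{a ∈ E | a.1 < x} := by
  have hvert : {y ∈ Icc 1 m | toLex (y, 0) < toLex (x, 0)} = Ico 1 x := by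
    ext y
    simp only [mem_filter, Finset.mem_Icc, Finset.mem_Ico, Prod.Lex.toLex_lt_toLex]
    omega
  rw [pos_eq hE, hvert, Nat.card_Ico]
  congr 2
  refine filter_congr fun a ha => ?_
  have := hE a ha
  rw [Prod.Lex.toLex_lt_toLex]
  omega

theorem pos_edge (hE : ∀ a ∈ E, 0 < a.2) {a : ℕ × ℕ} (ha1 : a.1 ≤ m) (ha2 : 0 < a.2) :
    pos m E (toLex a) = a.1 + #{b ∈ E | toLex b < toLex a} := by
  have hvert : {y ∈ Icc 1 m | toLex (y, 0) < toLex a} = Icc 1 a.1 := by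
    ext y
    simp only [mem_filter, Finset.mem_Icc, Prod.Lex.toLex_lt_toLex]
    omega
  rw [pos_eq hE, hvert, Nat.card_Icc, Nat.add_sub_cancel]

theorem card_filter_fst_le_pos {t : ℕ ×ₗ ℕ} (ht : t ∈ letters m E) :
    #{b ∈ expand m E | b.1 ≤ pos m E t} = #{e ∈ E | toLex e ≤ t} := by
  rw [expand, card_filter_image_of_injOn fun _ ha _ hb h =>
    pos_toLex_inj ha hb (congrArg Prod.fst h)]
  exact congrArg card (filter_congr fun e he =>
    strictMonoOn_pos.le_iff_le (toLex_mem_letters he) ht)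

end Expand

section ExpandStar

variable {m : ℕ} {E : Finset (ℕ × ℕ)} (hE : IsStar (Icc 1 m) E)
include hE

theorem IsStar.snd_pos : ∀ a ∈ E, 0 < a.2 := fun a ha => by
  have := hE.fst_lt_snd a ha
  omega

theorem IsStar.pos_edge {a : ℕ × ℕ} (ha : a ∈ E) :
    pos m E (toLex a) = a.1 + #{b ∈ E | toLex b < toLex a} :=
  _root_.pos_edge hE.snd_pos (Finset.mem_Icc.1 (hE.fst_mem a ha)).2 (hE.snd_pos a ha)

theorem IsStar.pos_lt_pos_vertex_snd {a : ℕ × ℕ} (ha : a ∈ E) :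
    pos m E (toLex a) < pos m E (toLex (a.2, 0)) :=
  pos_lt_pos (toLex_mem_letters ha) (Prod.Lex.toLex_lt_toLex.2 (Or.inl (hE.fst_lt_snd a ha)))

theorem IsStar.pos_vertex_fst_lt_pos {a : ℕ × ℕ} (ha : a ∈ E) :
    pos m E (toLex (a.1, 0)) < pos m E (toLex a) :=
  pos_lt_pos (toLex_vertex_mem_letters (hE.fst_mem a ha))
    (Prod.Lex.toLex_lt_toLex.2 (Or.inr ⟨rfl, hE.snd_pos a ha⟩))

theorem IsStar.pos_vertex_snd_inj {a b : ℕ × ℕ} (ha : a ∈ E) (hb : b ∈ E)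
    (h : pos m E (toLex (a.2, 0)) = pos m E (toLex (b.2, 0))) : a = b := by
  have := strictMonoOn_pos.injOn (toLex_vertex_mem_letters (hE.snd_mem a ha))
    (toLex_vertex_mem_letters (hE.snd_mem b hb)) h
  exact hE.snd_inj a ha b hb (congrArg Prod.fst (toLex.injective this))

theorem IsStar.pos_ne_pos_vertex_snd {a b : ℕ × ℕ} (ha : a ∈ E) (hb : b ∈ E) :
    pos m E (toLex a) ≠ pos m E (toLex (b.2, 0)) := fun h => by
  have := strictMonoOn_pos.injOn (toLex_mem_letters ha)
    (toLex_vertex_mem_letters (hE.snd_mem b hb)) h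
  exact (hE.snd_pos a ha).ne' (congrArg Prod.snd (toLex.injective this))

theorem IsStar.pos_vertex_snd_add_one_ne {a b : ℕ × ℕ} (ha : a ∈ E) (hb : b ∈ E) :
    pos m E (toLex (a.2, 0)) + 1 ≠ pos m E (toLex b) := fun h => by
  rcases lt_trichotomy b.1 a.2 with hba | hba | hba
  · have := pos_lt_pos (m := m) (toLex_mem_letters hb)
      (Prod.Lex.toLex_lt_toLex.2 (Or.inl hba) : toLex b < toLex (a.2, 0))
    omega
  · exact hE.fst_ne_snd b hb a ha hba
  · have := pos_lt_pos (E := E) (toLex_vertex_mem_letters (hE.snd_mem a ha))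
      (Prod.Lex.toLex_lt_toLex.2 (Or.inl hba) : toLex (a.2, 0) < toLex (b.1, 0))
    have := hE.pos_vertex_fst_lt_pos hb
    omega

theorem IsStar.pos_vertex_snd_lt_of_pos_add_one {a b : ℕ × ℕ} (ha : a ∈ E) (hb : b ∈ E)
    (h : pos m E (toLex a) + 1 = pos m E (toLex b)) :
    pos m E (toLex (a.2, 0)) < pos m E (toLex (b.2, 0)) := by
  have hab : toLex a < toLex b := by
    by_contra! hba
    have := (strictMonoOn_pos (m := m)).monotoneOn (toLex_mem_letters hb) (toLex_mem_letters ha) hba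
    omega
  rcases Prod.Lex.toLex_lt_toLex.1 hab with h1 | ⟨h1, h2⟩
  · have := pos_lt_pos (m := m) (toLex_mem_letters ha)
      (Prod.Lex.toLex_lt_toLex.2 (Or.inl h1) : toLex a < toLex (b.1, 0))
    have := hE.pos_vertex_fst_lt_pos hb
    omega
  · have : a.2 ≠ b.2 := fun h' => (hE.snd_inj a ha b hb h' ▸ h2).false
    exact pos_lt_pos (toLex_vertex_mem_letters (hE.snd_mem a ha))
      (Prod.Lex.toLex_lt_toLex.2 (Or.inl (by omega)))

theorem IsStar.isQArcs_expand {N : ℕ} (hN : N + 1 = m + #E) : IsQArcs N (expand m E) := by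
  have hle {t : ℕ ×ₗ ℕ} (ht : t ∈ letters m E) : pos m E t ≤ N := by
    have := pos_lt_card_add ht
    omega
  have hpos {a : ℕ × ℕ} (ha : a ∈ E) : 1 ≤ pos m E (toLex a) := by
    rw [hE.pos_edge ha]
    have := (Finset.mem_Icc.1 (hE.fst_mem a ha)).1
    omega
  simp only [expand]
  refine ⟨⟨?_, ?_, ?_, ?_, ?_⟩, ?_, ?_, ?_⟩ <;> simp only [forall_mem_image]
  · exact fun a ha => Finset.mem_Icc.2 ⟨hpos ha, hle (toLex_mem_letters ha)⟩
  · exact fun a ha => Finset.mem_Icc.2 ⟨(hpos ha).trans (hE.pos_lt_pos_vertex_snd ha).le,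
      hle (toLex_vertex_mem_letters (hE.snd_mem a ha))⟩
  · exact fun a ha => hE.pos_lt_pos_vertex_snd ha
  · exact fun a ha b hb h => by rw [hE.pos_vertex_snd_inj ha hb h]
  · exact fun a ha b hb => hE.pos_ne_pos_vertex_snd ha hb
  · exact fun a ha b hb h => by rw [pos_toLex_inj ha hb h]
  · exact fun a ha b hb => hE.pos_vertex_snd_add_one_ne ha hb
  · exact fun a ha b hb => hE.pos_vertex_snd_lt_of_pos_add_one ha hb

end ExpandStar

def collapse (A : Finset (ℕ × ℕ)) (p : ℕ) : ℕ := p + 1 - #{a ∈ A | a.1 ≤ p}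

def contract (A : Finset (ℕ × ℕ)) : Finset (ℕ × ℕ) :=
  A.image fun a => (collapse A a.1, collapse A a.2)

theorem card_filter_fst_le (A : Finset (ℕ × ℕ)) (q : ℕ) :
    #{a ∈ A | a.1 ≤ q} = #{a ∈ A | a.1 < q} + #{a ∈ A | a.1 = q} := by
  rw [← card_union_of_disjoint (disjoint_filter.2 fun _ _ h h' => h.ne h'), ← filter_or]
  exact congrArg card (filter_congr fun _ _ => le_iff_lt_or_eq)

section Collapse

variable {N : ℕ} {A : Finset (ℕ × ℕ)} (hA : IsQArcs N A)
include hA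

theorem IsQArcs.card_filter_fst_eq_of_mem {a : ℕ × ℕ} (ha : a ∈ A) :
    #{b ∈ A | b.1 = a.1} = 1 :=
  card_eq_one.2 ⟨a, ext fun b => by
    simp only [mem_filter, mem_singleton]
    refine ⟨fun h => hA.fst_inj b h.1 a ha h.2, ?_⟩
    rintro rfl
    exact ⟨ha, rfl⟩⟩

theorem IsQArcs.card_filter_fst_eq_le_one (q : ℕ) : #{b ∈ A | b.1 = q} ≤ 1 :=
  card_le_one.2 fun a ha b hb => by
    rw [mem_filter] at ha hb
    exact hA.fst_inj a ha.1 b hb.1 (ha.2.trans hb.2.symm)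

theorem IsQArcs.card_filter_fst_le_le (p : ℕ) : #{a ∈ A | a.1 ≤ p} ≤ p := by
  have := card_le_card_of_injOn Prod.fst (s := {a ∈ A | a.1 ≤ p}) (t := Icc 1 p) (fun a ha => ?_)
    (fun a ha b hb h => hA.fst_inj a (mem_filter.1 ha).1 b (mem_filter.1 hb).1 h)
  · rwa [Nat.card_Icc, Nat.add_sub_cancel] at this
  · obtain ⟨ha, hap⟩ := mem_filter.1 ha
    exact Finset.mem_Icc.2 ⟨(Finset.mem_Icc.1 (hA.fst_mem a ha)).1, hap⟩

theorem IsQArcs.collapse_succ (p : ℕ) :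
    collapse A (p + 1) + #{b ∈ A | b.1 = p + 1} = collapse A p + 1 := by
  have h1 := card_filter_fst_le A (p + 1)
  have h2 : #{a ∈ A | a.1 < p + 1} = #{a ∈ A | a.1 ≤ p} :=
    congrArg card (filter_congr fun _ _ => Nat.lt_succ_iff)
  have h3 := hA.card_filter_fst_le_le (p + 1)
  have h4 := hA.card_filter_fst_le_le p
  unfold collapse
  omega

theorem IsQArcs.collapse_mono : Monotone (collapse A) :=
  monotone_nat_of_le_succ fun p => by
    have := hA.collapse_succ p
    have := hA.card_filter_fst_eq_le_one (p + 1)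
    omega

theorem IsQArcs.collapse_lt_collapse_iff {p q : ℕ} (hq : ∀ b ∈ A, b.1 ≠ q) :
    collapse A p < collapse A q ↔ p < q := by
  refine ⟨fun h => lt_of_not_ge fun hqp => h.not_ge (hA.collapse_mono hqp), fun hpq => ?_⟩
  have hstep := hA.collapse_succ (q - 1)
  rw [Nat.sub_add_cancel (by omega), card_eq_zero.2 (filter_eq_empty_iff.2 hq)] at hstep
  have := hA.collapse_mono (Nat.le_sub_one_of_lt hpq)
  omega

theorem IsQArcs.collapse_snd_lt {a : ℕ × ℕ} (ha : a ∈ A) {p : ℕ} (h : a.2 < p) :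
    collapse A a.2 < collapse A p :=
  ((hA.collapse_lt_collapse_iff fun b hb => (hA.snd_add_one_ne_fst a ha b hb).symm).2
    (Nat.lt_succ_self a.2)).trans_le (hA.collapse_mono h)

theorem IsQArcs.collapse_eq_collapse_snd_iff {a : ℕ × ℕ} (ha : a ∈ A) {p : ℕ} :
    collapse A p = collapse A a.2 ↔ p = a.2 := by
  refine ⟨fun h => ?_, fun h => h ▸ rfl⟩
  rcases lt_trichotomy p a.2 with hlt | heq | hgt
  · have := (hA.collapse_lt_collapse_iff fun b hb => hA.fst_ne_snd b hb a ha).2 hlt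
    omega
  · exact heq
  · have := hA.collapse_snd_lt ha hgt
    omega

theorem IsQArcs.snd_lt_snd_of_collapse_eq {a b : ℕ × ℕ} (ha : a ∈ A) (hb : b ∈ A)
    (hlt : b.1 < a.1) (heq : collapse A b.1 = collapse A a.1) : b.2 < a.2 := by
  -- every position in `(b.1, a.1]` is an opener, and left-nesting-freeness chains their closers
  have hfst {q : ℕ} (h1 : b.1 < q) (h2 : q ≤ a.1) : ∃ c ∈ A, c.1 = q := by
    by_contra! h
    have := (hA.collapse_lt_collapse_iff h).2 h1
    have := hA.collapse_mono h2
    omega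
  have key : ∀ q, b.1 + 1 ≤ q → q ≤ a.1 → ∃ c ∈ A, c.1 = q ∧ b.2 < c.2 := by
    intro q hq
    induction q, hq using Nat.le_induction with
    | base =>
      intro h
      obtain ⟨c, hc, hcq⟩ := hfst (Nat.lt_succ_self _) h
      exact ⟨c, hc, hcq, hA.snd_lt_snd_of_fst_add_one b hb c hc hcq.symm⟩
    | succ q hq ih =>
      intro h
      obtain ⟨c, hc, hcq, hbc⟩ := ih (by omega)
      obtain ⟨d, hd, hdq⟩ := hfst (by omega) h
      exact ⟨d, hd, hdq, hbc.trans (hA.snd_lt_snd_of_fst_add_one c hc d hd (by omega))⟩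
  obtain ⟨c, hc, hca, hbc⟩ := key a.1 hlt le_rfl
  rwa [hA.fst_inj c hc a ha hca] at hbc

theorem IsQArcs.toLex_collapse_lt_iff {a b : ℕ × ℕ} (ha : a ∈ A) (hb : b ∈ A) :
    toLex (collapse A b.1, collapse A b.2) < toLex (collapse A a.1, collapse A a.2) ↔
      b.1 < a.1 := by
  have hsnd := hA.collapse_lt_collapse_iff (p := b.2) fun c hc => hA.fst_ne_snd c hc a ha
  rw [Prod.Lex.toLex_lt_toLex]
  constructor
  · rintro (h | ⟨h1, h2⟩)
    · exact lt_of_not_ge fun h' => h.not_ge (hA.collapse_mono h')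
    · rcases lt_trichotomy b.1 a.1 with hlt | heq | hgt
      · exact hlt
      · rw [hA.fst_inj b hb a ha heq] at h2
        exact absurd h2 (lt_irrefl _)
      · have := hA.snd_lt_snd_of_collapse_eq hb ha hgt h1.symm
        have := hsnd.1 h2
        omega
  · intro hlt
    rcases (hA.collapse_mono hlt.le).lt_or_eq with h | h
    · exact Or.inl h
    · exact Or.inr ⟨h, hsnd.2 (hA.snd_lt_snd_of_collapse_eq ha hb hlt h)⟩

theorem IsQArcs.collapse_injOn :
    Set.InjOn (fun a : ℕ × ℕ => (collapse A a.1, collapse A a.2)) A := fun a ha b hb h =>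
  hA.snd_inj a ha b hb ((hA.collapse_eq_collapse_snd_iff hb).1 (congrArg Prod.snd h))

theorem IsQArcs.card_contract : #(contract A) = #A :=
  card_image_of_injOn hA.collapse_injOn

theorem IsQArcs.collapse_eq_sub_card : collapse A N = N + 1 - #A := by
  rw [collapse, filter_true_of_mem fun a ha => (Finset.mem_Icc.1 (hA.fst_mem a ha)).2]

theorem IsQArcs.isStar_contract : IsStar (Icc 1 (collapse A N)) (contract A) := by
  have hle (p : ℕ) (hp : p ∈ Icc 1 N) : collapse A p ∈ Icc 1 (collapse A N) := by
    have := hA.card_filter_fst_le_le p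
    exact Finset.mem_Icc.2 ⟨by unfold collapse; omega, hA.collapse_mono (Finset.mem_Icc.1 hp).2⟩
  refine ⟨?_, ?_, ?_, ?_, ?_⟩ <;> simp only [contract, forall_mem_image]
  · exact fun a ha => hle _ (hA.fst_mem a ha)
  · exact fun a ha => hle _ (hA.snd_mem a ha)
  · exact fun a ha => (hA.collapse_lt_collapse_iff fun b hb => hA.fst_ne_snd b hb a ha).2
      (hA.fst_lt_snd a ha)
  · intro a ha b hb h
    rw [hA.snd_inj a ha b hb ((hA.collapse_eq_collapse_snd_iff hb).1 h)]
  · exact fun a ha b hb h => hA.fst_ne_snd a ha b hb ((hA.collapse_eq_collapse_snd_iff hb).1 h)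

theorem IsQArcs.expand_contract : expand (collapse A N) (contract A) = A := by
  have hstar := hA.isStar_contract
  have hfst {a : ℕ × ℕ} (ha : a ∈ A) :
      pos (collapse A N) (contract A) (toLex (collapse A a.1, collapse A a.2)) = a.1 := by
    rw [hstar.pos_edge (mem_image_of_mem _ ha), contract,
      card_filter_image_of_injOn hA.collapse_injOn,
      filter_congr fun b hb => hA.toLex_collapse_lt_iff ha hb]
    have h1 := card_filter_fst_le A a.1
    have h2 := hA.card_filter_fst_eq_of_mem ha
    have h3 := hA.card_filter_fst_le_le a.1
    unfold collapse
    omega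
  have hsnd {a : ℕ × ℕ} (ha : a ∈ A) :
      pos (collapse A N) (contract A) (toLex (collapse A a.2, 0)) = a.2 := by
    have hnot : ∀ b ∈ A, b.1 ≠ a.2 := fun b hb => hA.fst_ne_snd b hb a ha
    rw [pos_vertex hstar.snd_pos (hA.collapse_mono (Finset.mem_Icc.1 (hA.snd_mem a ha)).2 |>.trans
        (Nat.le_succ _)), contract, card_filter_image_of_injOn hA.collapse_injOn,
      filter_congr fun b _ => hA.collapse_lt_collapse_iff hnot]
    have h1 := card_filter_fst_le A a.2
    have h2 : #{b ∈ A | b.1 = a.2} = 0 := card_eq_zero.2 (filter_eq_empty_iff.2 hnot)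
    have h3 := hA.card_filter_fst_le_le a.2
    have h4 := (Finset.mem_Icc.1 (hA.snd_mem a ha)).1
    unfold collapse
    omega
  conv_rhs => rw [← image_id (s := A)]
  rw [expand, contract, image_image]
  exact image_congr fun a ha => Prod.ext (hfst ha) (hsnd ha)

end Collapse

theorem IsStar.contract_expand {m : ℕ} {E : Finset (ℕ × ℕ)} (hE : IsStar (Icc 1 m) E) :
    contract (expand m E) = E := by
  have hfst {a : ℕ × ℕ} (ha : a ∈ E) : collapse (expand m E) (pos m E (toLex a)) = a.1 := by
    rw [collapse, card_filter_fst_le_pos (toLex_mem_letters ha), card_filter_toLex_le ha,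
      hE.pos_edge ha]
    omega
  have hsnd {a : ℕ × ℕ} (ha : a ∈ E) :
      collapse (expand m E) (pos m E (toLex (a.2, 0))) = a.2 := by
    have h2 := Finset.mem_Icc.1 (hE.snd_mem a ha)
    have hle : #{e ∈ E | toLex e ≤ toLex (a.2, 0)} = #{e ∈ E | e.1 < a.2} := by
      refine congrArg card (filter_congr fun e he => ?_)
      have := hE.snd_pos e he
      rw [Prod.Lex.toLex_le_toLex]
      omega
    rw [collapse, card_filter_fst_le_pos (toLex_vertex_mem_letters (hE.snd_mem a ha)), hle,
      pos_vertex hE.snd_pos (by omega)]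
    omega
  conv_rhs => rw [← image_id (s := E)]
  rw [expand, contract, image_image]
  exact image_congr fun a ha => Prod.ext (hfst ha) (hsnd ha)

theorem ncard_isStar_eq_ncard_isQArcs {N m k : ℕ} (h : N + 1 = m + k) :
    {E | IsStar (Icc 1 m) E ∧ #E = k}.ncard = {A | IsQArcs N A ∧ #A = k}.ncard := by
  have hm {A : Finset (ℕ × ℕ)} (hA : IsQArcs N A) (hk : #A = k) : collapse A N = m := by
    rw [hA.collapse_eq_sub_card]
    omega
  refine Set.BijOn.ncard_eq (f := expand m) (Set.InvOn.bijOn (f' := contract) ⟨?_, ?_⟩ ?_ ?_)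
  · exact fun E hE => hE.1.contract_expand
  · rintro A ⟨hA, hk⟩
    rw [← hm hA hk]
    exact hA.expand_contract
  · rintro E ⟨hE, rfl⟩
    exact ⟨hE.isQArcs_expand h, card_expand⟩
  · rintro A ⟨hA, hk⟩
    exact ⟨hm hA hk ▸ hA.isStar_contract, hA.card_contract.trans hk⟩

/-- `Q(n-1,k)` equals the Stirling number of the second kind `S(n-k, n-2k)`. -/
theorem stmt_4 (n k : ℕ) (hk1 : 1 ≤ k) (hk2 : k ≤ (n - 1) / 2) :
    Qnum (n - 1) k = Stirling (n - k) (n - 2 * k) := by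
  rw [qnum_eq_ncard_isQArcs, stirling_eq_ncard_isStar (k := k) (by omega),
    ncard_isStar_eq_ncard_isQArcs (N := n - 1) (by omega)]
end
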